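/- arXiv:2007.00546 — 6 statements merged into one kernel-verified Lean document; each statement's English description precedes it below -/
import Mathlib

section
/- Let x = (x₁,…,x_d) : ℝ → ℝ^d be a solution of the system x_j'' + n_j² x_j + h_j(x₁,…,x_d) = p_j(t) for j = 1,…,d. Suppose that for some index j one has n_j ∈ ℕ and 2(sup h_j − inf h_j) < |∫₀^{2π} p_j(t) e^{i n_j t} dt|. Then x_j(t)² + x_j'(t)² → +∞ as |t| → +∞. -/
open Real Filter MeasureTheory intervalIntegral

lemma abs_cos_periodic' : Function.Periodic (fun s => |Real.cos s|) π := by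
  intro s; simp [Real.cos_add_pi]

lemma int_abs_cos_one' : ∫ s in (0:ℝ)..π, |Real.cos s| = 2 := by
  have hpi := Real.pi_pos
  have h1 : ∫ s in (0:ℝ)..(π/2), |Real.cos s| = 1 := by
    rw [intervalIntegral.integral_congr (g := Real.cos)]
    · simp [integral_cos]
    · intro s hs
      rw [Set.uIcc_of_le (by linarith)] at hs
      exact abs_of_nonneg (Real.cos_nonneg_of_mem_Icc ⟨by linarith [hs.1], hs.2⟩)
  have h2 : ∫ s in (π/2:ℝ)..π, |Real.cos s| = 1 := by
    rw [intervalIntegral.integral_congr (g := fun s => -Real.cos s)]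
    · simp [integral_cos]
    · intro s hs
      rw [Set.uIcc_of_le (by linarith)] at hs
      exact abs_of_nonpos (Real.cos_nonpos_of_pi_div_two_le_of_le hs.1 (by linarith [hs.2]))
  have := intervalIntegral.integral_add_adjacent_intervals
    (μ := volume) (a := (0:ℝ)) (b := π/2) (c := π) (f := fun s => |Real.cos s|)
    ((continuous_abs.comp Real.continuous_cos).intervalIntegrable (0:ℝ) (π/2))
    ((continuous_abs.comp Real.continuous_cos).intervalIntegrable (π/2) π)
  rw [← this, h1, h2]; norm_num

lemma int_abs_cos' (m : ℕ) (hm : 0 < m) (θ a : ℝ) :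
    ∫ s in a..a + 2*π, |Real.cos ((m:ℝ)*s + θ)| = 4 := by
  have hm' : (m:ℝ) ≠ 0 := by positivity
  rw [intervalIntegral.integral_comp_mul_add (fun u => |Real.cos u|) hm' θ]
  have h2 : (m:ℝ)*(a+2*π)+θ = ((m:ℝ)*a+θ) + ((2*m : ℤ) : ℝ) * π := by push_cast; ring
  have hint : ∀ t₁ t₂ : ℝ, IntervalIntegrable (fun s => |Real.cos s|) volume t₁ t₂ :=
    fun t₁ t₂ => (continuous_abs.comp Real.continuous_cos).intervalIntegrable _ _
  have h3 : ((2*m : ℤ) : ℝ) * π = (2*m : ℤ) • π := by simp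
  rw [h2, h3, abs_cos_periodic'.intervalIntegral_add_zsmul_eq (2*m) _ hint,
    abs_cos_periodic'.intervalIntegral_add_eq _ 0]
  rw [zero_add, int_abs_cos_one']
  have : ((2*(m:ℤ)) • (2:ℝ)) = 4*(m:ℝ) := by push_cast [zsmul_eq_mul]; ring
  rw [this, smul_eq_mul]
  field_simp

lemma intervalIntegral_conj' {f : ℝ → ℂ} {a b : ℝ} :
    (∫ t in a..b, (starRingEnd ℂ) (f t)) = (starRingEnd ℂ) (∫ t in a..b, f t) := by
  simp only [intervalIntegral, integral_conj, map_sub]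

lemma intervalIntegral_re' {f : ℝ → ℂ} {a b : ℝ} (hf : IntervalIntegrable f volume a b) :
    (∫ t in a..b, (f t).re) = (∫ t in a..b, f t).re := by
  have h1 := integral_re (μ := volume.restrict (Set.Ioc a b)) hf.1
  have h2 := integral_re (μ := volume.restrict (Set.Ioc b a)) hf.2
  simp only [RCLike.re_to_complex] at h1 h2
  simp only [intervalIntegral, h1, h2, Complex.sub_re]

/-- Consider the system `x_j'' + n_j² x_j + h_j(x₁,…,x_d) = p_j(t)`, `j = 1,…,d`, with
`n_j > 0`, `h_j` locally Lipschitz and bounded, `p_j` continuous and `2π`-periodic.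
If for some index `j` one has `n_j ∈ ℕ` and
`2 (sup h_j - inf h_j) < |∫₀^{2π} p_j(t) e^{i n_j t} dt|`, then every solution satisfies
`x_j(t)² + x_j'(t)² → +∞` as `|t| → +∞`. -/
theorem unbounded_of_global_condition
    (d : ℕ) (n : Fin d → ℝ) (h : Fin d → (Fin d → ℝ) → ℝ) (p : Fin d → ℝ → ℝ)
    (hn : ∀ j, 0 < n j)
    (hLip : ∀ j, LocallyLipschitz (h j))
    (hbd : ∀ j, ∃ M, ∀ y, |h j y| ≤ M)
    (hp : ∀ j, Continuous (p j))
    (hper : ∀ j, Function.Periodic (p j) (2 * Real.pi))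
    (x x' x'' : Fin d → ℝ → ℝ)
    (hx' : ∀ j t, HasDerivAt (x j) (x' j t) t)
    (hx'' : ∀ j t, HasDerivAt (x' j) (x'' j t) t)
    (hsol : ∀ j t, x'' j t + (n j) ^ 2 * x j t + h j (fun i => x i t) = p j t)
    (j : Fin d) (m : ℕ) (hm : 0 < m) (hnj : n j = (m : ℝ))
    (hres : 2 * ((⨆ y, h j y) - (⨅ y, h j y)) <
      ‖(∫ t in (0 : ℝ)..(2 * Real.pi),
        (p j t : ℂ) * Complex.exp (Complex.I * (n j : ℂ) * (t : ℂ)))‖) :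
    Tendsto (fun t => (x j t) ^ 2 + (x' j t) ^ 2) (cocompact ℝ) atTop := by
  classical
  have hpi := Real.pi_pos
  set ω : ℝ := n j with hωdef
  obtain ⟨M, hM⟩ := hbd j
  have hne : Nonempty (Fin d → ℝ) := ⟨fun _ => 0⟩
  have hbA : BddAbove (Set.range (h j)) := ⟨M, by rintro v ⟨y, rfl⟩; exact (abs_le.1 (hM y)).2⟩
  have hbB : BddBelow (Set.range (h j)) := ⟨-M, by rintro v ⟨y, rfl⟩; exact (abs_le.1 (hM y)).1⟩
  set S := ⨆ y, h j y with hSdef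
  set In := ⨅ y, h j y with hIndef
  set c : ℝ := (S + In)/2 with hcdef
  set Δ : ℝ := S - In with hΔdef
  have hyS : ∀ y, h j y ≤ S := fun y => le_ciSup hbA y
  have hyI : ∀ y, In ≤ h j y := fun y => ciInf_le hbB y
  have hΔ0 : 0 ≤ Δ := by
    have h1 := hyI (fun _ => 0); have h2 := hyS (fun _ => 0)
    rw [hΔdef]; linarith
  set H : ℝ → ℝ := fun t => h j (fun i => x i t) with hHdef
  have hxC : ∀ i, Continuous (x i) :=
    fun i => Differentiable.continuous (fun t => (hx' i t).differentiableAt)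
  have hx'C : ∀ i, Continuous (x' i) :=
    fun i => Differentiable.continuous (fun t => (hx'' i t).differentiableAt)
  have hHC : Continuous H := (hLip j).continuous.comp (continuous_pi fun i => hxC i)
  have hHc : ∀ t, |H t - c| ≤ Δ/2 := by
    intro t
    have h1 := hyI (fun i => x i t); have h2 := hyS (fun i => x i t)
    rw [abs_le]; constructor <;> simp only [hHdef, hcdef, hΔdef] <;> [linarith; linarith]
  -- the complex exponential
  set E : ℝ → ℂ := fun t => Complex.exp (-(Complex.I * ω * t)) with hEdef
  have hEC : Continuous E :=
    Complex.continuous_exp.comp ((continuous_const.mul Complex.continuous_ofReal).neg)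
  have hEabs : ∀ t, ‖E t‖ = 1 := by
    intro t; rw [hEdef]; simp [Complex.norm_exp]
  have hEper : ∀ t, E (t + 2*π) = E t := by
    intro t
    have heq : -(Complex.I * ω * ((t:ℝ) + 2*π)) = -(Complex.I * ω * t) + (Int.cast (-(m:ℤ)) : ℂ) * (2*π*Complex.I) := by
      rw [hnj]; push_cast; ring
    simp only [hEdef]
    rw [show ((t + 2*π : ℝ) : ℂ) = ((t:ℝ):ℂ) + 2*(π:ℂ) by push_cast; ring]
    rw [heq, Complex.exp_add, Complex.exp_int_mul_two_pi_mul_I, mul_one]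
  -- z and w
  set z : ℝ → ℂ := fun t => (x' j t : ℂ) + ((ω * x j t : ℝ) : ℂ) * Complex.I with hzdef
  have hzD : ∀ t, HasDerivAt z ((x'' j t : ℂ) + ((ω * x' j t : ℝ) : ℂ) * Complex.I) t := by
    intro t
    exact ((hx'' j t).ofReal_comp).add (((hx' j t).const_mul ω).ofReal_comp.mul_const Complex.I)
  have hzC : Continuous z := by
    apply Continuous.add
    · exact Complex.continuous_ofReal.comp (hx'C j)
    · exact (Complex.continuous_ofReal.comp (continuous_const.mul (hxC j))).mul continuous_const
  have hED : ∀ t : ℝ, HasDerivAt E (-(Complex.I*ω) * E t) t := by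
    intro t
    have h1 : HasDerivAt (fun s : ℂ => Complex.exp (-(Complex.I*ω*s)))
        (-(Complex.I*ω) * Complex.exp (-(Complex.I*ω*(t:ℂ)))) (t:ℂ) := by
      have h0 : HasDerivAt (fun s : ℂ => -(Complex.I*(ω:ℂ)*s)) (-(Complex.I*ω)) (t:ℂ) := by
        simpa using ((hasDerivAt_id ((t:ℝ):ℂ)).const_mul (-(Complex.I*(ω:ℂ))))
      simpa [mul_comm] using h0.cexp
    exact h1.comp_ofReal
  set w : ℝ → ℂ := fun t => E t * z t with hwdef
  have hwC : Continuous w := hEC.mul hzC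
  have hwD : ∀ t, HasDerivAt w (E t * ((p j t : ℂ) - (H t : ℂ))) t := by
    intro t
    have hd := (hED t).mul (hzD t)
    refine hd.congr_deriv ?_
    symm
    have hps : ((x'' j t : ℝ) : ℂ) + (ω:ℂ)^2 * ((x j t : ℝ):ℂ) + ((H t : ℝ):ℂ) = ((p j t : ℝ):ℂ) := by
      exact_mod_cast congrArg Complex.ofReal (hsol j t)
    rw [← hps]
    simp only [hzdef, hEdef]
    push_cast
    linear_combination (Complex.exp (-(Complex.I*(ω:ℂ)*(t:ℂ))) * (ω:ℂ)^2 * ((x j t : ℝ):ℂ)) * Complex.I_sq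
  -- FTC
  have hfC : Continuous (fun s => E s * ((p j s : ℂ) - (H s : ℂ))) :=
    hEC.mul ((Complex.continuous_ofReal.comp (hp j)).sub (Complex.continuous_ofReal.comp hHC))
  have hkey : ∀ t, w (t + 2*π) - w t = ∫ s in t..t+2*π, E s * ((p j s:ℂ) - (H s:ℂ)) :=
    fun t => (intervalIntegral.integral_eq_sub_of_hasDerivAt (fun s _ => hwD s)
      (hfC.intervalIntegrable _ _)).symm
  -- P and Q
  set P : ℂ := ∫ s in (0:ℝ)..2*π, E s * (p j s : ℂ) with hPdef
  have hPper : ∀ t, (∫ s in t..t+2*π, E s * (p j s:ℂ)) = P := by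
    intro t
    have hper2 : Function.Periodic (fun s => E s * (p j s:ℂ)) (2*π) := by
      intro s; simp only []; rw [hEper s, hper j s]
    simpa using hper2.intervalIntegral_add_eq t 0
  set Q : ℝ → ℂ := fun t => ∫ s in t..t+2*π, E s * ((H s - c : ℝ) : ℂ) with hQdef
  have hQC : Continuous (fun s => E s * ((H s - c : ℝ) : ℂ)) :=
    hEC.mul (Complex.continuous_ofReal.comp (hHC.sub continuous_const))
  have hωne : (Complex.I * (ω:ℂ)) ≠ 0 :=
    mul_ne_zero Complex.I_ne_zero (Complex.ofReal_ne_zero.2 (hn j).ne')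
  have hczero : ∀ t, (∫ s in t..t+2*π, E s * (c:ℂ)) = 0 := by
    intro t
    have hFD : ∀ s : ℝ, HasDerivAt (fun u : ℝ => E u * ((c:ℂ) / (-(Complex.I*(ω:ℂ)))))
        (E s * (c:ℂ)) s := by
      intro s
      have := (hED s).mul_const ((c:ℂ) / (-(Complex.I*(ω:ℂ))))
      refine this.congr_deriv ?_
      symm
      have hω0 : (ω:ℂ) ≠ 0 := Complex.ofReal_ne_zero.2 (hn j).ne'
      field_simp
    rw [intervalIntegral.integral_eq_sub_of_hasDerivAt (fun s _ => hFD s)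
      ((hEC.mul continuous_const).intervalIntegrable _ _)]
    rw [hEper t]; ring
  have hkey2 : ∀ t, w (t+2*π) - w t = P - Q t := by
    intro t
    rw [hkey t, ← hPper t]
    have hpt : ∀ s, E s * ((p j s:ℂ) - (H s:ℂ)) =
        E s * (p j s:ℂ) - (E s * ((H s - c : ℝ):ℂ) + E s * (c:ℂ)) := by
      intro s; push_cast; ring
    rw [intervalIntegral.integral_congr (fun s _ => hpt s)]
    rw [intervalIntegral.integral_sub (f := fun s => E s * (p j s:ℂ))
      (g := fun s => E s * ((H s - c : ℝ):ℂ) + E s * (c:ℂ)) ((hEC.mul (show Continuous fun s : ℝ => ((p j s : ℝ) : ℂ) from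
      Complex.continuous_ofReal.comp (hp j))).intervalIntegrable _ _)
      ((hQC.add (hEC.mul continuous_const)).intervalIntegrable _ _)]
    rw [intervalIntegral.integral_add (f := fun s => E s * ((H s - c : ℝ):ℂ))
      (g := fun s => E s * (c:ℂ)) (hQC.intervalIntegrable _ _)
      ((hEC.mul continuous_const).intervalIntegrable _ _)]
    rw [hczero, add_zero]
  -- the key estimate |Q t| ≤ 2Δ
  have hQbound : ∀ t, ‖Q t‖ ≤ 2*Δ := by
    intro t
    by_cases hq : Q t = 0
    · rw [hq]; simpa using (by linarith : (0:ℝ) ≤ 2*Δ)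
    have hr : 0 < ‖Q t‖ := norm_pos_iff.2 hq
    set r : ℝ := ‖Q t‖ with hrdef
    set e : ℂ := (starRingEnd ℂ) (Q t) / (r:ℂ) with hedef
    have he1 : ‖e‖ = 1 := by
      rw [hedef, norm_div, Complex.norm_conj, Complex.norm_of_nonneg hr.le]
      exact div_self hr.ne'
    have her : (e * Q t).re = r := by
      have h0 : e * Q t = ((r^2 : ℝ) : ℂ) / (r:ℂ) := by
        rw [hedef, div_mul_eq_mul_div, mul_comm ((starRingEnd ℂ) (Q t)) (Q t),
          Complex.mul_conj]
        congr 1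
        rw [← Complex.sq_norm]
      rw [h0, show ((r^2:ℝ):ℂ) = (r:ℂ)*(r:ℂ) by push_cast; ring, mul_div_assoc,
        div_self (Complex.ofReal_ne_zero.2 hr.ne'), mul_one, Complex.ofReal_re]
    set θ : ℝ := Complex.arg e with hθdef
    have he2 : Complex.exp ((θ:ℂ) * Complex.I) = e := by
      have h0 := Complex.norm_mul_exp_arg_mul_I e
      rw [he1] at h0
      simpa using h0
    have hmain : r = ∫ s in t..t+2*π, Real.cos (θ - ω*s) * (H s - c) := by
      rw [← her]
      have h1 : e * Q t = ∫ s in t..t+2*π, e * (E s * ((H s - c:ℝ):ℂ)) := by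
        rw [hQdef]; simp only []; rw [intervalIntegral.integral_const_mul]
      have h2 := intervalIntegral_re' (f := fun s => e * (E s * ((H s - c:ℝ):ℂ)))
        ((continuous_const.mul hQC).intervalIntegrable t (t+2*π))
      have h4 : ∀ s, (e * (E s * ((H s - c:ℝ):ℂ))).re
          = Real.cos (θ - ω*s) * (H s - c) := by
        intro s
        have h3 : e * E s = Complex.exp ((((θ - ω*s) : ℝ):ℂ) * Complex.I) := by
          rw [← he2]
          simp only [hEdef]
          rw [← Complex.exp_add]
          congr 1
          push_cast; ring
        rw [← mul_assoc, h3, Complex.mul_re]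
        simp only [Complex.exp_ofReal_mul_I_re, Complex.ofReal_re, Complex.ofReal_im,
          mul_zero, sub_zero]
      have h9 : (∫ s in t..t+2*π, Real.cos (θ - ω*s) * (H s - c))
          = ∫ s in t..t+2*π, (e * (E s * ((H s - c:ℝ):ℂ))).re :=
        intervalIntegral.integral_congr (fun s _ => (h4 s).symm)
      rw [h1, h9]
      exact h2.symm
    have hcosC : Continuous fun s : ℝ => Real.cos (θ - ω*s) :=
      Real.continuous_cos.comp (continuous_const.sub (continuous_const.mul continuous_id))
    have h5 : (∫ s in t..t+2*π, Real.cos (θ - ω*s) * (H s - c))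
        ≤ ∫ s in t..t+2*π, |Real.cos (θ - ω*s)| * (Δ/2) := by
      apply intervalIntegral.integral_mono_on (by linarith)
        ((hcosC.mul (hHC.sub continuous_const)).intervalIntegrable _ _)
        ((hcosC.abs.mul continuous_const).intervalIntegrable _ _)
      intro s _
      calc Real.cos (θ - ω*s) * (H s - c) ≤ |Real.cos (θ - ω*s) * (H s - c)| := le_abs_self _
        _ = |Real.cos (θ - ω*s)| * |H s - c| := abs_mul _ _
        _ ≤ |Real.cos (θ - ω*s)| * (Δ/2) := mul_le_mul_of_nonneg_left (hHc s) (abs_nonneg _)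
    have h6 : (∫ s in t..t+2*π, |Real.cos (θ - ω*s)| * (Δ/2))
        = (Δ/2) * ∫ s in t..t+2*π, |Real.cos (θ - ω*s)| := by
      rw [intervalIntegral.integral_mul_const]; ring
    have h7 : (∫ s in t..t+2*π, |Real.cos (θ - ω*s)|) = 4 := by
      have h8 : ∀ s : ℝ, |Real.cos (θ - ω*s)| = |Real.cos ((m:ℝ)*s + (-θ))| := by
        intro s
        rw [← Real.cos_neg (θ - ω*s)]
        congr 1
        rw [hnj]; ring
      rw [intervalIntegral.integral_congr (fun s _ => h8 s)]
      exact int_abs_cos' m hm (-θ) t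
    rw [h6, h7] at h5
    linarith
  -- |P| > 2Δ
  have hPgt : 2*Δ < ‖P‖ := by
    have hintble : IntervalIntegrable
        (fun t : ℝ => (p j t : ℂ) * Complex.exp (Complex.I * (ω:ℂ) * (t:ℂ))) volume 0 (2*π) := by
      apply Continuous.intervalIntegrable
      exact (Complex.continuous_ofReal.comp (hp j)).mul
        (Complex.continuous_exp.comp (continuous_const.mul Complex.continuous_ofReal))
    have hconj : P = (starRingEnd ℂ)
        (∫ t in (0:ℝ)..2*π, (p j t : ℂ) * Complex.exp (Complex.I * (ω:ℂ) * (t:ℂ))) := by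
      rw [hPdef, ← intervalIntegral_conj']
      apply intervalIntegral.integral_congr
      intro s _
      have hc1 : (starRingEnd ℂ) ((p j s : ℂ) * Complex.exp (Complex.I * (ω:ℂ) * (s:ℂ)))
          = (p j s : ℂ) * Complex.exp (-(Complex.I * (ω:ℂ) * (s:ℂ))) := by
        rw [map_mul, Complex.conj_ofReal, ← Complex.exp_conj]
        congr 2
        simp only [map_mul, Complex.conj_I, Complex.conj_ofReal]
        ring
      show E s * (p j s : ℂ)
        = (starRingEnd ℂ) ((p j s : ℂ) * Complex.exp (Complex.I * (ω:ℂ) * (s:ℂ)))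
      rw [hc1]
      simp only [hEdef]
      ring
    rw [hconj, Complex.norm_conj]
    exact hres
  have hPpos : 0 < ‖P‖ := lt_of_le_of_lt (by linarith) hPgt
  set δ : ℝ := ‖P‖ * (‖P‖ - 2*Δ) with hδdef
  have hδpos : 0 < δ := mul_pos hPpos (by linarith)
  -- G
  set G : ℝ → ℝ := fun t => ((starRingEnd ℂ) P * w t).re with hGdef
  have hGC : Continuous G := Complex.continuous_re.comp (continuous_const.mul hwC)
  have hstep : ∀ t, G t + δ ≤ G (t + 2*π) := by
    intro t
    have h1 : G (t+2*π) - G t = ((starRingEnd ℂ) P * (P - Q t)).re := by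
      rw [hGdef]
      simp only []
      rw [← Complex.sub_re, ← mul_sub, hkey2 t]
    have h2 : ((starRingEnd ℂ) P * (P - Q t)).re
        = ‖P‖^2 - ((starRingEnd ℂ) P * Q t).re := by
      rw [mul_sub, Complex.sub_re]
      congr 1
      rw [mul_comm, Complex.mul_conj]
      simp [Complex.normSq_eq_norm_sq, ← Complex.ofReal_pow]
    have h3 : ((starRingEnd ℂ) P * Q t).re ≤ ‖P‖ * (2*Δ) := by
      calc ((starRingEnd ℂ) P * Q t).re ≤ ‖(starRingEnd ℂ) P * Q t‖ := Complex.re_le_norm _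
        _ = ‖P‖ * ‖Q t‖ := by rw [norm_mul, Complex.norm_conj]
        _ ≤ ‖P‖ * (2*Δ) := mul_le_mul_of_nonneg_left (hQbound t) (norm_nonneg _)
    have h4 : ‖P‖^2 = ‖P‖ * ‖P‖ := sq (‖P‖)
    have h5 : δ = ‖P‖ * ‖P‖ - ‖P‖ * (2*Δ) := by rw [hδdef]; ring
    linarith
  have hiter : ∀ (k:ℕ) (t:ℝ), G t + k*δ ≤ G (t + 2*π*k) := by
    intro k
    induction k with
    | zero => intro t; simp
    | succ k ih =>
      intro t
      have h1 := ih t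
      have h2 := hstep (t + 2*π*k)
      have h3 : t + 2*π*((k:ℕ)+1 : ℕ) = (t + 2*π*k) + 2*π := by push_cast; ring
      rw [h3]; push_cast; push_cast at h1; linarith
  obtain ⟨a₀, ha₀mem, ha₀⟩ := isCompact_Icc.exists_isMinOn (α := ℝ) (β := ℝ)
    (s := Set.Icc 0 (2*π)) (Set.nonempty_Icc.2 (by linarith)) hGC.continuousOn
  obtain ⟨b₀, hb₀mem, hb₀⟩ := isCompact_Icc.exists_isMaxOn (α := ℝ) (β := ℝ)
    (s := Set.Icc 0 (2*π)) (Set.nonempty_Icc.2 (by linarith)) hGC.continuousOn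
  set A := G a₀ with hAdef
  set B := G b₀ with hBdef
  have hlow : ∀ t : ℝ, 0 ≤ t → A + (t/(2*π) - 1)*δ ≤ G t := by
    intro t ht
    have h2π : (0:ℝ) < 2*π := by linarith
    set K : ℕ := ⌊t/(2*π)⌋.toNat with hKdef
    have hq0 : (0:ℝ) ≤ t/(2*π) := by positivity
    have hKfloor : (K:ℝ) = ((⌊t/(2*π)⌋ : ℤ) : ℝ) := by
      rw [hKdef]
      exact_mod_cast congrArg (Int.cast : ℤ → ℝ)
        (Int.toNat_of_nonneg (Int.floor_nonneg.2 hq0))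
    have hKle : (K:ℝ) ≤ t/(2*π) := by rw [hKfloor]; exact Int.floor_le _
    have hKgt : t/(2*π) < (K:ℝ) + 1 := by
      rw [hKfloor]; exact Int.lt_floor_add_one _
    have hKle' : (K:ℝ) * (2*π) ≤ t := (le_div_iff₀ h2π).1 hKle
    have hKgt' : t < ((K:ℝ)+1) * (2*π) := (div_lt_iff₀ h2π).1 hKgt
    have hs0 : 0 ≤ t - 2*π*K := by linarith
    have hs2 : t - 2*π*K ≤ 2*π := by linarith
    have h1 := hiter K (t - 2*π*K)
    rw [show t - 2*π*K + 2*π*K = t by ring] at h1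
    have h2 : A ≤ G (t - 2*π*K) := isMinOn_iff.1 ha₀ _ ⟨hs0, hs2⟩
    have h3 : (t/(2*π) - 1) * δ ≤ (K:ℝ)*δ :=
      mul_le_mul_of_nonneg_right (by linarith) hδpos.le
    linarith
  have hhigh : ∀ t : ℝ, t ≤ 0 → G t ≤ B + (t/(2*π))*δ := by
    intro t ht
    have h2π : (0:ℝ) < 2*π := by linarith
    set K : ℕ := ⌈-t/(2*π)⌉.toNat with hKdef
    have hq0 : (0:ℝ) ≤ -t/(2*π) := div_nonneg (by linarith) h2π.le
    have hKceil : (K:ℝ) = ((⌈-t/(2*π)⌉ : ℤ) : ℝ) := by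
      rw [hKdef]
      exact_mod_cast congrArg (Int.cast : ℤ → ℝ)
        (Int.toNat_of_nonneg (Int.ceil_nonneg hq0))
    have hKge : -t/(2*π) ≤ (K:ℝ) := by rw [hKceil]; exact Int.le_ceil _
    have hKlt : (K:ℝ) < -t/(2*π) + 1 := by
      rw [hKceil]; exact Int.ceil_lt_add_one _
    have hKge' : -t ≤ (K:ℝ) * (2*π) := (div_le_iff₀ h2π).1 hKge
    have hKlt' : ((K:ℝ) - 1) * (2*π) < -t := (lt_div_iff₀ h2π).1 (by linarith)
    have hs0 : 0 ≤ t + 2*π*K := by linarith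
    have hs2 : t + 2*π*K ≤ 2*π := by linarith
    have h1 := hiter K t
    have h2 : G (t + 2*π*K) ≤ B := isMaxOn_iff.1 hb₀ _ ⟨hs0, hs2⟩
    have h3 : (-t/(2*π))*δ ≤ (K:ℝ)*δ := mul_le_mul_of_nonneg_right hKge hδpos.le
    have h4 : (-t/(2*π))*δ = -(t/(2*π)*δ) := by ring
    linarith
  have htop : Tendsto G atTop atTop := by
    apply tendsto_atTop_mono' atTop ((eventually_ge_atTop (0:ℝ)).mono fun t ht => hlow t ht)
    have h1 : Tendsto (fun t:ℝ => t/(2*π)) atTop atTop :=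
      tendsto_id.atTop_div_const (by linarith)
    have h2 : Tendsto (fun t:ℝ => t/(2*π) - 1) atTop atTop :=
      tendsto_atTop_add_const_right atTop (-1) h1
    exact tendsto_atTop_add_const_left atTop A (h2.atTop_mul_const hδpos)
  have hbot : Tendsto G atBot atBot := by
    apply tendsto_atBot_mono' atBot ((eventually_le_atBot (0:ℝ)).mono fun t ht => hhigh t ht)
    have h1 : Tendsto (fun t:ℝ => t/(2*π)) atBot atBot :=
      tendsto_id.atBot_div_const (by linarith)
    exact tendsto_atBot_add_const_left atBot B (h1.atBot_mul_const hδpos)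
  -- conclusion
  have hGabs : ∀ t, |G t| ≤ ‖P‖ * ‖z t‖ := by
    intro t
    calc |G t| = |((starRingEnd ℂ) P * w t).re| := rfl
      _ ≤ ‖(starRingEnd ℂ) P * w t‖ := Complex.abs_re_le_norm _
      _ = ‖P‖ * ‖w t‖ := by rw [norm_mul, Complex.norm_conj]
      _ = ‖P‖ * ‖z t‖ := by
          rw [hwdef]; simp only []; rw [norm_mul, hEabs, one_mul]
  have hzsq : ∀ t, ‖z t‖^2 = (x' j t)^2 + ω^2*(x j t)^2 := by
    intro t
    rw [Complex.sq_norm, Complex.normSq_apply]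
    simp only [hzdef, Complex.add_re, Complex.ofReal_re, Complex.add_im, Complex.ofReal_im,
      Complex.mul_re, Complex.mul_im, Complex.I_re, Complex.I_im]
    ring
  set K₀ : ℝ := max 1 (ω^2) with hK₀def
  have hK₀pos : (0:ℝ) < K₀ := lt_of_lt_of_le one_pos (le_max_left _ _)
  have hlb : ∀ t, (G t)^2/(‖P‖^2 * K₀) ≤ (x j t)^2 + (x' j t)^2 := by
    intro t
    have h1 : (G t)^2 ≤ ‖P‖^2 * (‖z t‖)^2 := by
      have h0 := hGabs t
      calc (G t)^2 = |G t|^2 := (sq_abs _).symm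
        _ ≤ (‖P‖ * ‖z t‖)^2 := by
            apply pow_le_pow_left₀ (abs_nonneg _) h0
        _ = ‖P‖^2 * (‖z t‖)^2 := by ring
    have h2 : ‖z t‖^2 ≤ K₀ * ((x j t)^2 + (x' j t)^2) := by
      rw [hzsq]
      have l1 : (1:ℝ) ≤ K₀ := le_max_left _ _
      have l2 : ω^2 ≤ K₀ := le_max_right _ _
      nlinarith [sq_nonneg (x j t), sq_nonneg (x' j t)]
    rw [div_le_iff₀ (by positivity)]
    nlinarith [sq_nonneg (‖P‖)]
  have hGtend : Tendsto (fun t => (G t)^2/(‖P‖^2 * K₀)) (cocompact ℝ) atTop := by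
    rw [cocompact_eq_atBot_atTop, tendsto_sup]
    constructor
    · have hsq : Tendsto (fun t => (G t)^2) atBot atTop := by
        have := hbot.atBot_mul_atBot₀ hbot
        simpa [sq] using this
      exact hsq.atTop_div_const (by positivity)
    · have hsq : Tendsto (fun t => (G t)^2) atTop atTop := by
        have := htop.atTop_mul_atTop₀ htop
        simpa [sq] using this
      exact hsq.atTop_div_const (by positivity)
  exact tendsto_atTop_mono hlb hGtend
end

section
/- Fix an index j with n_j ∈ ℕ, let φ_j ∈ [0,2π] satisfy |∫₀^{2π} p_j(t) e^{i n_j t} dt| = ∫₀^{2π} p_j(t) sin(n_j t + φ_j) dt, and set Γ = ∫₀^{2π} p_j(t) sin(n_j t + φ_j) dt − 2(sup h_j − inf h_j). Define V(ζ,η) = η·sin φ_j − n_j·ζ·cos φ_j. Then for every solution x of the system and every positive integer k, V(x_j(2kπ), x_j'(2kπ)) − V(x_j(0), x_j'(0)) ≥ kΓ, and V(x_j(0), x_j'(0)) − V(x_j(2kπ), x_j'(2kπ)) ≥ −kΓ for every negative integer k. -/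
open Real Filter MeasureTheory intervalIntegral

lemma sinPer (m : ℕ) (φ : ℝ) : Function.Periodic (fun t => Real.sin ((m:ℝ)*t + φ)) (2*π) := by
  intro t
  have : (m:ℝ)*(t + 2*π) + φ = ((m:ℝ)*t + φ) + (m:ℕ) * (2*π) := by ring
  simp only [this, Real.sin_add_nat_mul_two_pi]

lemma absSinPer : Function.Periodic (fun u => |Real.sin u|) π := by
  intro t; simp [Real.sin_add_pi]

lemma int_abs_sin_pi : ∫ u in (0:ℝ)..π, |Real.sin u| = 2 := by
  have : ∀ u ∈ Set.uIcc (0:ℝ) π, |Real.sin u| = Real.sin u := by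
    intro u hu
    rw [Set.uIcc_of_le Real.pi_pos.le] at hu
    exact abs_of_nonneg (Real.sin_nonneg_of_nonneg_of_le_pi hu.1 hu.2)
  rw [intervalIntegral.integral_congr this, integral_sin]
  norm_num

lemma int_abs_sin (m : ℕ) (hm : 0 < m) (φ : ℝ) :
    ∫ t in (0:ℝ)..(2*π), |Real.sin ((m:ℝ)*t + φ)| = 4 := by
  have hmne : (m:ℝ) ≠ 0 := Nat.cast_ne_zero.2 hm.ne'
  have h1 : (∫ t in (0:ℝ)..(2*π), |Real.sin ((m:ℝ)*t + φ)|)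
      = (m:ℝ)⁻¹ • ∫ u in ((m:ℝ)*0 + φ)..((m:ℝ)*(2*π) + φ), |Real.sin u| :=
    integral_comp_mul_add (fun u => |Real.sin u|) hmne φ
  have h2 : ((m:ℝ)*(2*π) + φ) = φ + ((2*m : ℤ)) • π := by rw [zsmul_eq_mul]; push_cast; ring
  have h3 : ((m:ℝ)*0 + φ) = φ := by ring
  rw [h1, h2, h3, absSinPer.intervalIntegral_add_zsmul_eq (2*m) φ
    (fun a b => (continuous_abs.comp Real.continuous_sin).intervalIntegrable a b),
    absSinPer.intervalIntegral_add_eq φ 0]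
  rw [zero_add, int_abs_sin_pi]
  push_cast
  field_simp
  rw [zsmul_eq_mul, smul_eq_mul, one_div]
  push_cast
  rw [show (2:ℝ)*m*2 = m*4 by ring, ← mul_assoc, inv_mul_cancel₀ hmne, one_mul]

lemma int_sin_period (m : ℕ) (hm : 0 < m) (φ a : ℝ) :
    ∫ t in a..(a + 2*π), Real.sin ((m:ℝ)*t + φ) = 0 := by
  have hmne : (m:ℝ) ≠ 0 := Nat.cast_ne_zero.2 hm.ne'
  rw [integral_comp_mul_add Real.sin hmne φ, integral_sin]
  have : (m:ℝ)*(a + 2*π) + φ = ((m:ℝ)*a + φ) + (m:ℕ) * (2*π) := by ring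
  rw [this, Real.cos_add_nat_mul_two_pi]
  simp

lemma per_lower (p g : ℝ → ℝ) (hpc : Continuous p) (hgc : Continuous g)
    (hpper : Function.Periodic p (2*π)) (m : ℕ) (hm : 0 < m) (φ c B : ℝ)
    (habs : ∀ t, |g t - c| ≤ B) (a : ℝ) :
    (∫ t in (0:ℝ)..(2*π), p t * Real.sin ((m:ℝ)*t + φ)) - 4*B
      ≤ ∫ t in a..(a+2*π), (p t - g t) * Real.sin ((m:ℝ)*t + φ) := by
  have hsc : Continuous (fun t : ℝ => Real.sin ((m:ℝ)*t + φ)) :=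
    Real.continuous_sin.comp ((continuous_const.mul continuous_id).add continuous_const)
  have hle : a ≤ a + 2*π := by linarith [Real.pi_pos]
  have ip : IntervalIntegrable (fun t => p t * Real.sin ((m:ℝ)*t + φ)) volume a (a+2*π) :=
    (hpc.mul hsc).intervalIntegrable _ _
  have ig : IntervalIntegrable (fun t => g t * Real.sin ((m:ℝ)*t + φ)) volume a (a+2*π) :=
    (hgc.mul hsc).intervalIntegrable _ _
  have e1 : ∫ t in a..(a+2*π), (p t - g t) * Real.sin ((m:ℝ)*t + φ)
      = (∫ t in a..(a+2*π), p t * Real.sin ((m:ℝ)*t + φ))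
        - ∫ t in a..(a+2*π), g t * Real.sin ((m:ℝ)*t + φ) := by
    rw [← intervalIntegral.integral_sub ip ig]
    simp only [sub_mul]
  -- periodicity of p * sin
  have hps : Function.Periodic (fun t => p t * Real.sin ((m:ℝ)*t + φ)) (2*π) := by
    intro t
    have e : (m:ℝ)*(t + 2*π) + φ = ((m:ℝ)*t + φ) + (m:ℕ) * (2*π) := by ring
    simp only [hpper t, e, Real.sin_add_nat_mul_two_pi]
  have e2 : ∫ t in a..(a+2*π), p t * Real.sin ((m:ℝ)*t + φ)
      = ∫ t in (0:ℝ)..(2*π), p t * Real.sin ((m:ℝ)*t + φ) := by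
    simpa using hps.intervalIntegral_add_eq a 0
  -- bound on g integral
  have i1 : IntervalIntegrable (fun t => (g t - c) * Real.sin ((m:ℝ)*t + φ)) volume a (a+2*π) :=
    ((hgc.sub continuous_const).mul hsc).intervalIntegrable _ _
  have i2 : IntervalIntegrable (fun t => c * Real.sin ((m:ℝ)*t + φ)) volume a (a+2*π) :=
    (continuous_const.mul hsc).intervalIntegrable _ _
  have e3 : ∫ t in a..(a+2*π), g t * Real.sin ((m:ℝ)*t + φ)
      = ∫ t in a..(a+2*π), (g t - c) * Real.sin ((m:ℝ)*t + φ) := by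
    rw [intervalIntegral.integral_congr (g := fun t =>
        (g t - c) * Real.sin ((m:ℝ)*t + φ) + c * Real.sin ((m:ℝ)*t + φ)) (fun t _ => by ring),
      intervalIntegral.integral_add i1 i2, intervalIntegral.integral_const_mul,
      int_sin_period m hm φ a, mul_zero, add_zero]
  have hB : 0 ≤ B := le_trans (abs_nonneg _) (habs 0)
  have e4 : ∫ t in a..(a+2*π), |Real.sin ((m:ℝ)*t + φ)| = 4 := by
    have habs_per : Function.Periodic (fun t => |Real.sin ((m:ℝ)*t + φ)|) (2*π) := by
      intro t
      have e : (m:ℝ)*(t + 2*π) + φ = ((m:ℝ)*t + φ) + (m:ℕ) * (2*π) := by ring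
      simp only [e, Real.sin_add_nat_mul_two_pi]
    have := habs_per.intervalIntegral_add_eq a 0
    simpa [int_abs_sin m hm φ] using this
  have bound : ∫ t in a..(a+2*π), (g t - c) * Real.sin ((m:ℝ)*t + φ) ≤ 4*B := by
    calc ∫ t in a..(a+2*π), (g t - c) * Real.sin ((m:ℝ)*t + φ)
        ≤ |∫ t in a..(a+2*π), (g t - c) * Real.sin ((m:ℝ)*t + φ)| := le_abs_self _
      _ ≤ ∫ t in a..(a+2*π), |(g t - c) * Real.sin ((m:ℝ)*t + φ)| :=
          intervalIntegral.abs_integral_le_integral_abs hle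
      _ ≤ ∫ t in a..(a+2*π), B * |Real.sin ((m:ℝ)*t + φ)| := by
          apply intervalIntegral.integral_mono_on hle
            (((hgc.sub continuous_const).mul hsc).abs.intervalIntegrable _ _)
            ((continuous_const.mul hsc.abs).intervalIntegrable _ _)
          intro t _
          show |(g t - c) * Real.sin ((m:ℝ)*t + φ)| ≤ B * |Real.sin ((m:ℝ)*t + φ)|
          rw [abs_mul]
          exact mul_le_mul_of_nonneg_right (habs t) (abs_nonneg _)
      _ = B * ∫ t in a..(a+2*π), |Real.sin ((m:ℝ)*t + φ)| :=
          intervalIntegral.integral_const_mul _ _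
      _ = 4*B := by rw [e4]; ring
  rw [e1, e2]
  linarith [e3 ▸ bound]

lemma growth_pos (F : ℝ → ℝ) (hFc : Continuous F) (Γ : ℝ)
    (hper : ∀ a : ℝ, Γ ≤ ∫ t in a..(a+2*π), F t) :
    ∀ N : ℕ, (N:ℝ) * Γ ≤ ∫ t in (0:ℝ)..(2*N*π), F t := by
  intro N
  induction N with
  | zero => simp
  | succ N ih =>
    have e : (2*((N:ℕ)+1:ℝ)*π) = 2*(N:ℝ)*π + 2*π := by ring
    have split := intervalIntegral.integral_add_adjacent_intervals (μ := volume)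
      (hFc.intervalIntegrable 0 (2*(N:ℝ)*π)) (hFc.intervalIntegrable (2*(N:ℝ)*π) (2*(N:ℝ)*π + 2*π))
    have := hper (2*(N:ℝ)*π)
    push_cast
    rw [e, ← split]
    push_cast at ih
    linarith

lemma growth_neg (F : ℝ → ℝ) (hFc : Continuous F) (Γ : ℝ)
    (hper : ∀ a : ℝ, Γ ≤ ∫ t in a..(a+2*π), F t) :
    ∀ N : ℕ, (N:ℝ) * Γ ≤ ∫ t in (-(2*N*π) : ℝ)..0, F t := by
  intro N
  induction N with
  | zero => simp
  | succ N ih =>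
    have e : (-(2*((N:ℕ)+1:ℝ)*π)) + 2*π = -(2*(N:ℝ)*π) := by ring
    have split := intervalIntegral.integral_add_adjacent_intervals (μ := volume)
      (hFc.intervalIntegrable (-(2*((N:ℝ)+1)*π)) (-(2*(N:ℝ)*π))) (hFc.intervalIntegrable (-(2*(N:ℝ)*π)) 0)
    have h1 := hper (-(2*((N:ℝ)+1)*π))
    rw [show (-(2*((N:ℝ)+1)*π)) + 2*π = -(2*(N:ℝ)*π) by ring] at h1
    push_cast
    rw [← split]
    push_cast at ih
    linarith

/-- Fix an index `j` with `n_j ∈ ℕ`, let `φ_j ∈ [0,2π]` realize the modulus of the Fourier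
coefficient of `p_j`, set `Γ = ∫₀^{2π} p_j(t) sin(n_j t + φ_j) dt - 2(sup h_j - inf h_j)`
and `V(ζ,η) = η sin φ_j - n_j ζ cos φ_j`.  Then along every solution,
`V(x_j(2kπ), x_j'(2kπ)) - V(x_j(0), x_j'(0)) ≥ kΓ` for every positive integer `k`, and
`V(x_j(0), x_j'(0)) - V(x_j(2kπ), x_j'(2kπ)) ≥ -kΓ` for every negative integer `k`. -/
theorem lyapunov_growth_along_solutions
    (d : ℕ) (n : Fin d → ℝ) (h : Fin d → (Fin d → ℝ) → ℝ) (p : Fin d → ℝ → ℝ)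
    (hn : ∀ j, 0 < n j)
    (hLip : ∀ j, LocallyLipschitz (h j))
    (hbd : ∀ j, ∃ M, ∀ y, |h j y| ≤ M)
    (hp : ∀ j, Continuous (p j))
    (hper : ∀ j, Function.Periodic (p j) (2 * Real.pi))
    (x x' x'' : Fin d → ℝ → ℝ)
    (hx' : ∀ j t, HasDerivAt (x j) (x' j t) t)
    (hx'' : ∀ j t, HasDerivAt (x' j) (x'' j t) t)
    (hsol : ∀ j t, x'' j t + (n j) ^ 2 * x j t + h j (fun i => x i t) = p j t)
    (j : Fin d) (m : ℕ) (hm : 0 < m) (hnj : n j = (m : ℝ))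
    (φj : ℝ) (hφj : φj ∈ Set.Icc (0 : ℝ) (2 * Real.pi))
    (hφeq : ‖∫ t in (0 : ℝ)..(2 * Real.pi),
        (p j t : ℂ) * Complex.exp (Complex.I * (n j : ℂ) * (t : ℂ))‖
      = ∫ t in (0 : ℝ)..(2 * Real.pi), p j t * Real.sin (n j * t + φj))
    (Γ : ℝ)
    (hΓ : Γ = (∫ t in (0 : ℝ)..(2 * Real.pi), p j t * Real.sin (n j * t + φj))
      - 2 * ((⨆ y, h j y) - (⨅ y, h j y)))
    (V : ℝ → ℝ → ℝ)
    (hV : ∀ ζ η, V ζ η = η * Real.sin φj - n j * ζ * Real.cos φj) :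
    (∀ k : ℤ, 0 < k →
      V (x j (2 * k * Real.pi)) (x' j (2 * k * Real.pi)) - V (x j 0) (x' j 0) ≥ k * Γ) ∧
    (∀ k : ℤ, k < 0 →
      V (x j 0) (x' j 0) - V (x j (2 * k * Real.pi)) (x' j (2 * k * Real.pi)) ≥ -k * Γ) := by
  
  rw [hnj] at hΓ hV
  -- continuity of solution components
  have hxc : ∀ i, Continuous (x i) := fun i =>
    continuous_iff_continuousAt.2 fun t => (hx' i t).continuousAt
  have hgc : Continuous (fun t => h j (fun i => x i t)) :=
    (hLip j).continuous.comp (continuous_pi fun i => hxc i)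
  have hsc : Continuous (fun t : ℝ => Real.sin ((m:ℝ)*t + φj)) :=
    Real.continuous_sin.comp ((continuous_const.mul continuous_id).add continuous_const)
  have hFc : Continuous (fun t => (p j t - h j (fun i => x i t)) * Real.sin ((m:ℝ)*t + φj)) :=
    ((hp j).sub hgc).mul hsc
  -- sup/inf
  obtain ⟨M, hM⟩ := hbd j
  have hba : BddAbove (Set.range (h j)) := ⟨M, by rintro _ ⟨y, rfl⟩; exact (abs_le.1 (hM y)).2⟩
  have hbb : BddBelow (Set.range (h j)) := ⟨-M, by rintro _ ⟨y, rfl⟩; exact (abs_le.1 (hM y)).1⟩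
  have hub : ∀ y, h j y ≤ ⨆ y, h j y := fun y => le_ciSup hba y
  have hlb : ∀ y, (⨅ y, h j y) ≤ h j y := fun y => ciInf_le hbb y
  have habs : ∀ t : ℝ, |h j (fun i => x i t) - ((⨆ y, h j y) + (⨅ y, h j y))/2|
      ≤ ((⨆ y, h j y) - (⨅ y, h j y))/2 := by
    intro t
    rw [abs_le]
    constructor
    · linarith [hlb (fun i => x i t)]
    · linarith [hub (fun i => x i t)]
  -- per period lower bound
  have key : ∀ a : ℝ, Γ ≤ ∫ t in a..(a+2*Real.pi),
      (p j t - h j (fun i => x i t)) * Real.sin ((m:ℝ)*t + φj) := by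
    intro a
    have := per_lower (p j) (fun t => h j (fun i => x i t)) (hp j) hgc (hper j) m hm φj
      (((⨆ y, h j y) + (⨅ y, h j y))/2) (((⨆ y, h j y) - (⨅ y, h j y))/2) habs a
    rw [hΓ]
    linarith
  -- the Lyapunov-type function along the solution and its derivative
  have hv' : ∀ t : ℝ, HasDerivAt
      (fun t => x' j t * Real.sin ((m:ℝ)*t + φj) - (m:ℝ) * (x j t * Real.cos ((m:ℝ)*t + φj)))
      ((p j t - h j (fun i => x i t)) * Real.sin ((m:ℝ)*t + φj)) t := by
    intro t
    have hlin : HasDerivAt (fun t : ℝ => (m:ℝ)*t + φj) (m:ℝ) t := by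
      simpa using ((hasDerivAt_id t).const_mul (m:ℝ)).add_const φj
    have hS : HasDerivAt (fun t : ℝ => Real.sin ((m:ℝ)*t + φj))
        (Real.cos ((m:ℝ)*t + φj) * (m:ℝ)) t := (Real.hasDerivAt_sin _).comp t hlin
    have hC : HasDerivAt (fun t : ℝ => Real.cos ((m:ℝ)*t + φj))
        (-Real.sin ((m:ℝ)*t + φj) * (m:ℝ)) t := (Real.hasDerivAt_cos _).comp t hlin
    have h1 := (hx'' j t).mul hS
    have h2 := ((hx' j t).mul hC).const_mul (m:ℝ)
    have h3 := h1.sub h2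
    refine h3.congr_deriv ?_
    have hsol' : x'' j t = p j t - (m:ℝ)^2 * x j t - h j (fun i => x i t) := by
      have := hsol j t; rw [hnj] at this; linarith
    rw [hsol']
    ring
  have ftc : ∀ a b : ℝ,
      (x' j b * Real.sin ((m:ℝ)*b + φj) - (m:ℝ) * (x j b * Real.cos ((m:ℝ)*b + φj)))
      - (x' j a * Real.sin ((m:ℝ)*a + φj) - (m:ℝ) * (x j a * Real.cos ((m:ℝ)*a + φj)))
      = ∫ t in a..b, (p j t - h j (fun i => x i t)) * Real.sin ((m:ℝ)*t + φj) := by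
    intro a b
    exact (intervalIntegral.integral_eq_sub_of_hasDerivAt (fun t _ => hv' t)
      (hFc.intervalIntegrable a b)).symm
  -- trigonometric identities at multiples of the period
  have trig : ∀ k : ℤ, Real.sin ((m:ℝ)*(2*(k:ℝ)*Real.pi) + φj) = Real.sin φj
      ∧ Real.cos ((m:ℝ)*(2*(k:ℝ)*Real.pi) + φj) = Real.cos φj := by
    intro k
    have e : (m:ℝ)*(2*(k:ℝ)*Real.pi) + φj = φj + ((k*m : ℤ):ℝ)*(2*Real.pi) := by
      push_cast; ring
    rw [e]
    exact ⟨Real.sin_add_int_mul_two_pi _ _, Real.cos_add_int_mul_two_pi _ _⟩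
  have hVv : ∀ k : ℤ, V (x j (2*(k:ℝ)*Real.pi)) (x' j (2*(k:ℝ)*Real.pi))
      = x' j (2*(k:ℝ)*Real.pi) * Real.sin ((m:ℝ)*(2*(k:ℝ)*Real.pi) + φj)
        - (m:ℝ) * (x j (2*(k:ℝ)*Real.pi) * Real.cos ((m:ℝ)*(2*(k:ℝ)*Real.pi) + φj)) := by
    intro k
    rw [hV, (trig k).1, (trig k).2]
    ring
  have hV0 : V (x j 0) (x' j 0)
      = x' j 0 * Real.sin ((m:ℝ)*0 + φj) - (m:ℝ) * (x j 0 * Real.cos ((m:ℝ)*0 + φj)) := by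
    rw [hV]
    simp only [mul_zero, zero_add]
    ring
  constructor
  · intro k hk
    obtain ⟨N, hN⟩ : ∃ N : ℕ, (k:ℝ) = (N:ℝ) := ⟨k.toNat, by
      exact_mod_cast (Int.toNat_of_nonneg hk.le).symm⟩
    have h2 := growth_pos _ hFc Γ key N
    rw [ge_iff_le, hVv k, hV0, ftc 0 (2*(k:ℝ)*Real.pi), hN]
    exact h2
  · intro k hk
    obtain ⟨N, hN⟩ : ∃ N : ℕ, (k:ℝ) = -(N:ℝ) := ⟨(-k).toNat, by
      have : ((-k).toNat : ℤ) = -k := Int.toNat_of_nonneg (by omega)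
      have := congrArg (fun z : ℤ => (z:ℝ)) this
      push_cast at this
      linarith⟩
    have h2 := growth_neg _ hFc Γ key N
    have e : (2*(k:ℝ)*Real.pi) = -(2*(N:ℝ)*Real.pi) := by rw [hN]; ring
    rw [ge_iff_le, hVv k, hV0, ftc (2*(k:ℝ)*Real.pi) 0, e, hN]
    linarith
end

section
/- Fix an index j with n_j ∈ ℕ and suppose 2(sup h_j − inf h_j) < |∫₀^{2π} p_j(t) e^{i n_j t} dt|. Then for every solution x of the system, x_j(2kπ)² + x_j'(2kπ)² → +∞ as the integer k tends to ±∞ (i.e. as |k| → +∞ with k ∈ ℤ). -/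
open Real Filter MeasureTheory intervalIntegral

lemma abscos_int (m : ℕ) (hm : 0 < m) (θ a : ℝ) :
    ∫ s in a..a + 2 * Real.pi, |Real.cos ((m : ℝ) * s + θ)| = 4 := by
  have hm' : (0 : ℝ) < m := by exact_mod_cast hm
  have hm0 : (m : ℝ) ≠ 0 := ne_of_gt hm'
  set ψ : ℝ → ℝ := fun s => |Real.cos ((m : ℝ) * s + θ)| with hψ
  have hψc : Continuous ψ := (Real.continuous_cos.comp (by continuity)).abs
  have h_int : ∀ t₁ t₂, IntervalIntegrable ψ MeasureSpace.volume t₁ t₂ :=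
    fun t₁ t₂ => hψc.intervalIntegrable t₁ t₂
  have hper : Function.Periodic ψ (Real.pi / m) := by
    intro s
    simp only [hψ]
    have : (m : ℝ) * (s + Real.pi / m) + θ = ((m : ℝ) * s + θ) + Real.pi := by
      field_simp; ring
    rw [this, Real.cos_add_pi, abs_neg]
  have h2π : a + 2 * Real.pi = a + ((2 * m : ℤ) • (Real.pi / m)) := by
    rw [zsmul_eq_mul]
    push_cast
    rw [mul_assoc, ← mul_div_assoc, mul_div_cancel_left₀ π hm0]
  rw [h2π, hper.intervalIntegral_add_zsmul_eq (2 * m) a h_int]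
  set t₀ : ℝ := (-(Real.pi / 2) - θ) / m with ht₀
  rw [hper.intervalIntegral_add_eq a t₀]
  have hend : ∀ s ∈ Set.uIcc t₀ (t₀ + Real.pi / m), ψ s = Real.cos ((m : ℝ) * s + θ) := by
    intro s hs
    rw [Set.uIcc_of_le (le_add_of_nonneg_right (by positivity) : t₀ ≤ t₀ + Real.pi / m)] at hs
    · have h1 : -(Real.pi / 2) ≤ (m : ℝ) * s + θ := by
        have : (m : ℝ) * t₀ + θ = -(Real.pi / 2) := by rw [ht₀]; field_simp; ring
        nlinarith [hs.1]
      have h2 : (m : ℝ) * s + θ ≤ Real.pi / 2 := by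
        have : (m : ℝ) * (t₀ + Real.pi / m) + θ = Real.pi / 2 := by rw [ht₀]; field_simp; ring
        nlinarith [hs.2]
      exact abs_of_nonneg (Real.cos_nonneg_of_mem_Icc ⟨h1, h2⟩)
  rw [intervalIntegral.integral_congr hend]
  have hsub : ∫ s in t₀..t₀ + Real.pi / m, Real.cos ((m : ℝ) * s + θ)
      = ((m : ℝ))⁻¹ • ∫ u in ((m:ℝ) * t₀ + θ)..((m:ℝ) * (t₀ + Real.pi / m) + θ), Real.cos u :=
    intervalIntegral.integral_comp_mul_add Real.cos (ne_of_gt hm') θ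
  rw [hsub, integral_cos]
  have e1 : (m : ℝ) * t₀ + θ = -(Real.pi / 2) := by rw [ht₀]; field_simp; ring
  have e2 : (m : ℝ) * (t₀ + Real.pi / m) + θ = Real.pi / 2 := by rw [ht₀]; field_simp; ring
  rw [e1, e2, Real.sin_pi_div_two, Real.sin_neg, Real.sin_pi_div_two]
  push_cast
  field_simp
  simp [hm0]
  rw [mul_assoc, ← mul_assoc (m:ℝ), mul_inv_cancel₀ hm0]
  norm_num

lemma phase_bound (m : ℕ) (hm : 0 < m) (g : ℝ → ℝ) (hg : Continuous g)
    (A₀ : ℝ) (hA : ∀ s, |g s| ≤ A₀) (a : ℝ) :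
    ‖(∫ s in a..a + 2 * Real.pi, Complex.exp (Complex.I * (m : ℂ) * (s : ℂ)) * (g s : ℂ))‖
      ≤ 4 * A₀ := by
  have hA0 : 0 ≤ A₀ := le_trans (abs_nonneg _) (hA 0)
  set J : ℂ := ∫ s in a..a + 2 * Real.pi, Complex.exp (Complex.I * (m : ℂ) * (s : ℂ)) * (g s : ℂ)
    with hJ
  set θ : ℝ := -Complex.arg J with hθ
  have hintc : Continuous fun s : ℝ =>
      Complex.exp (Complex.I * (m : ℂ) * (s : ℂ)) * (g s : ℂ) := by
    apply Continuous.mul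
    · exact Complex.continuous_exp.comp (by continuity)
    · exact Complex.continuous_ofReal.comp hg
  have key0 : Complex.exp ((θ : ℂ) * Complex.I) * J = ((‖J‖ : ℝ) : ℂ) := by
    conv_lhs => rw [← Complex.norm_mul_exp_arg_mul_I J]
    rw [hθ]
    push_cast
    rw [← mul_assoc, mul_comm (Complex.exp _) ((‖J‖ : ℂ)), mul_assoc,
      ← Complex.exp_add]
    norm_num
  have key : (‖J‖ : ℝ) = (Complex.exp ((θ : ℂ) * Complex.I) * J).re := by
    rw [key0, Complex.ofReal_re]
  have hmul : Complex.exp ((θ : ℂ) * Complex.I) * J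
      = ∫ s in a..a + 2 * Real.pi,
          Complex.exp ((θ : ℂ) * Complex.I) *
            (Complex.exp (Complex.I * (m : ℂ) * (s : ℂ)) * (g s : ℂ)) := by
    rw [hJ, intervalIntegral.integral_const_mul]
  have hintc2 : Continuous fun s : ℝ =>
      Complex.exp ((θ : ℂ) * Complex.I) *
        (Complex.exp (Complex.I * (m : ℂ) * (s : ℂ)) * (g s : ℂ)) :=
    continuous_const.mul hintc
  have hre : (Complex.exp ((θ : ℂ) * Complex.I) * J).re
      = ∫ s in a..a + 2 * Real.pi, Real.cos ((m : ℝ) * s + θ) * g s := by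
    rw [hmul]
    have h2 := Complex.reCLM.intervalIntegral_comp_comm
      (μ := MeasureSpace.volume) (hintc2.intervalIntegrable a (a + 2 * Real.pi))
    rw [show (∫ s in a..a + 2 * Real.pi,
        Complex.exp ((θ : ℂ) * Complex.I) *
          (Complex.exp (Complex.I * (m : ℂ) * (s : ℂ)) * (g s : ℂ))).re
      = Complex.reCLM (∫ s in a..a + 2 * Real.pi,
        Complex.exp ((θ : ℂ) * Complex.I) *
          (Complex.exp (Complex.I * (m : ℂ) * (s : ℂ)) * (g s : ℂ))) from rfl, ← h2]
    apply intervalIntegral.integral_congr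
    intro s _
    have hexp : Complex.exp ((θ : ℂ) * Complex.I) * Complex.exp (Complex.I * (m : ℂ) * (s : ℂ))
        = Complex.exp ((((m : ℝ) * s + θ : ℝ) : ℂ) * Complex.I) := by
      rw [← Complex.exp_add]
      push_cast
      ring_nf
    simp only [Complex.reCLM_apply, ← mul_assoc, hexp, Complex.mul_re, Complex.ofReal_re,
      Complex.ofReal_im, Complex.exp_ofReal_mul_I_re, mul_zero, sub_zero]
  have hmono : ∫ s in a..a + 2 * Real.pi, Real.cos ((m : ℝ) * s + θ) * g s
      ≤ ∫ s in a..a + 2 * Real.pi, |Real.cos ((m : ℝ) * s + θ)| * A₀ := by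
    apply intervalIntegral.integral_mono_on (by linarith [Real.pi_pos] : a ≤ a + 2 * Real.pi)
    · exact ((Real.continuous_cos.comp (by continuity)).mul hg).intervalIntegrable _ _
    · exact (((Real.continuous_cos.comp (by continuity)).abs.mul
        continuous_const)).intervalIntegrable _ _
    · intro s _
      calc Real.cos ((m : ℝ) * s + θ) * g s ≤ |Real.cos ((m : ℝ) * s + θ) * g s| := le_abs_self _
        _ = |Real.cos ((m : ℝ) * s + θ)| * |g s| := abs_mul _ _
        _ ≤ |Real.cos ((m : ℝ) * s + θ)| * A₀ := by
            exact mul_le_mul_of_nonneg_left (hA s) (abs_nonneg _)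
  have hval : ∫ s in a..a + 2 * Real.pi, |Real.cos ((m : ℝ) * s + θ)| * A₀ = 4 * A₀ := by
    rw [intervalIntegral.integral_mul_const, abscos_int m hm θ a]
  calc (‖J‖ : ℝ) = _ := key
    _ ≤ _ := hre ▸ (hval ▸ hmono)

lemma telescope_bound (w : ℝ → ℂ) (W : ℂ) (E : ℝ) (hE0 : 0 ≤ E)
    (hstep : ∀ a : ℝ, ‖w (a + 2*Real.pi) - w a - W‖ ≤ E) :
    ∀ k : ℤ, ‖w (2*(k:ℝ)*Real.pi) - (w 0 + k • W)‖ ≤ |(k:ℝ)| * E := by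
  intro k
  induction k using Int.induction_on with
  | zero => simp
  | succ k ih =>
    have key := hstep (2*(k:ℝ)*Real.pi)
    have harg : 2*(((k:ℤ)+1 : ℤ):ℝ)*Real.pi = 2*(k:ℝ)*Real.pi + 2*Real.pi := by
      push_cast; ring
    have hsmul : ((k:ℤ)+1) • W = (k:ℤ) • W + W := by rw [add_zsmul, one_zsmul]
    have hid : w (2*(k:ℝ)*Real.pi + 2*Real.pi) - (w 0 + ((k:ℤ) • W + W))
        = (w (2*(k:ℝ)*Real.pi) - (w 0 + (k:ℤ) • W))
          + (w (2*(k:ℝ)*Real.pi + 2*Real.pi) - w (2*(k:ℝ)*Real.pi) - W) := by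
      abel
    calc ‖w (2*(((k:ℤ)+1 : ℤ):ℝ)*Real.pi) - (w 0 + ((k:ℤ)+1) • W)‖
        = ‖(w (2*(k:ℝ)*Real.pi) - (w 0 + (k:ℤ) • W))
            + (w (2*(k:ℝ)*Real.pi + 2*Real.pi) - w (2*(k:ℝ)*Real.pi) - W)‖ := by
          rw [harg, hsmul, hid]
      _ ≤ ‖w (2*(k:ℝ)*Real.pi) - (w 0 + (k:ℤ) • W)‖
            + ‖w (2*(k:ℝ)*Real.pi + 2*Real.pi) - w (2*(k:ℝ)*Real.pi) - W‖ := norm_add_le _ _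
      _ ≤ |(k:ℝ)| * E + E := add_le_add ih key
      _ ≤ |(((k:ℤ)+1 : ℤ):ℝ)| * E := by
          push_cast
          have h1 : |(k:ℝ)| = (k:ℝ) := abs_of_nonneg (by positivity)
          have h2 : |(k:ℝ) + 1| = (k:ℝ) + 1 := abs_of_nonneg (by positivity)
          rw [h1, h2]; nlinarith
  | pred k ih =>
    have key := hstep (2*((-(k:ℤ)-1 : ℤ):ℝ)*Real.pi)
    have harg : 2*((-(k:ℤ)-1 : ℤ):ℝ)*Real.pi + 2*Real.pi = 2*((-(k:ℤ) : ℤ):ℝ)*Real.pi := by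
      push_cast; ring
    have hsmul : (-(k:ℤ)-1) • W = (-(k:ℤ)) • W - W := by rw [sub_zsmul, one_zsmul]; abel
    rw [harg] at key
    have hid : w (2*((-(k:ℤ)-1 : ℤ):ℝ)*Real.pi) - (w 0 + ((-(k:ℤ)) • W - W))
        = (w (2*((-(k:ℤ) : ℤ):ℝ)*Real.pi) - (w 0 + (-(k:ℤ)) • W))
          - (w (2*((-(k:ℤ) : ℤ):ℝ)*Real.pi) - w (2*((-(k:ℤ)-1 : ℤ):ℝ)*Real.pi) - W) := by
      abel
    calc ‖w (2*((-(k:ℤ)-1 : ℤ):ℝ)*Real.pi) - (w 0 + (-(k:ℤ)-1) • W)‖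
        = ‖(w (2*((-(k:ℤ) : ℤ):ℝ)*Real.pi) - (w 0 + (-(k:ℤ)) • W))
            - (w (2*((-(k:ℤ) : ℤ):ℝ)*Real.pi) - w (2*((-(k:ℤ)-1 : ℤ):ℝ)*Real.pi) - W)‖ := by
          rw [hsmul, hid]
      _ ≤ ‖w (2*((-(k:ℤ) : ℤ):ℝ)*Real.pi) - (w 0 + (-(k:ℤ)) • W)‖
            + ‖w (2*((-(k:ℤ) : ℤ):ℝ)*Real.pi) - w (2*((-(k:ℤ)-1 : ℤ):ℝ)*Real.pi) - W‖ :=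
          norm_sub_le _ _
      _ ≤ |((-(k:ℤ) : ℤ):ℝ)| * E + E := add_le_add ih key
      _ ≤ |((-(k:ℤ)-1 : ℤ):ℝ)| * E := by
          push_cast
          have h1 : |(-(k:ℝ))| = (k:ℝ) := by
            rw [abs_neg]; exact abs_of_nonneg (by positivity)
          have h2 : |(-(k:ℝ) - 1)| = (k:ℝ) + 1 := by
            rw [show -(k:ℝ) - 1 = -((k:ℝ)+1) by ring, abs_neg]
            exact abs_of_nonneg (by positivity)
          rw [h1, h2]; nlinarith

lemma final_tendsto (F : ℤ → ℝ) (δ C μ2 : ℝ) (hδ : 0 < δ) (hμ : 0 < μ2)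
    (hb : ∀ k : ℤ, (max (|(k:ℝ)| * δ - C) 0)^2 / μ2 ≤ F k) :
    Tendsto F (cocompact ℤ) atTop := by
  set q : ℝ → ℝ := fun r => (max (r * δ - C) 0)^2 / μ2 with hq
  have hqmono : ∀ r₁ r₂ : ℝ, r₁ ≤ r₂ → q r₁ ≤ q r₂ := by
    intro r₁ r₂ hr
    have h1 : max (r₁ * δ - C) 0 ≤ max (r₂ * δ - C) 0 :=
      max_le_max (by nlinarith) le_rfl
    have h2 : (0:ℝ) ≤ max (r₁ * δ - C) 0 := le_max_right _ _
    exact (div_le_div_iff_of_pos_right hμ).2 (by nlinarith)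
  have hqtop : Tendsto q atTop atTop := by
    have l1 : Tendsto (fun r : ℝ => r * δ - C) atTop atTop :=
      tendsto_atTop_add_const_right atTop (-C) (tendsto_id.atTop_mul_const hδ)
    have l2 : Tendsto (fun r : ℝ => max (r * δ - C) 0) atTop atTop :=
      tendsto_atTop_mono (fun r => le_max_left _ _) l1
    have l3 : Tendsto (fun r : ℝ => (max (r * δ - C) 0)^2) atTop atTop := by
      have := l2.atTop_mul_atTop₀ l2
      simpa [pow_two] using this
    exact l3.atTop_div_const hμ
  rw [cocompact_eq_atBot_atTop, tendsto_sup]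
  constructor
  · -- atBot
    have hcomp : Tendsto (fun k : ℤ => q (-(k:ℝ))) atBot atTop := by
      have hneg : Tendsto (fun k : ℤ => -(k:ℝ)) atBot atTop := by
        have : Tendsto (fun k : ℤ => (-k : ℤ)) atBot atTop := tendsto_neg_atBot_atTop
        have h2 := tendsto_intCast_atTop_atTop (R := ℝ) |>.comp this
        simpa [Function.comp_def, Int.cast_neg] using h2
      exact hqtop.comp hneg
    refine tendsto_atTop_mono (fun k => ?_) hcomp
    exact le_trans (hqmono _ _ (neg_le_abs (k:ℝ))) (hb k)
  · -- atTop
    have hcomp : Tendsto (fun k : ℤ => q (k:ℝ)) atTop atTop :=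
      hqtop.comp (tendsto_intCast_atTop_atTop (R := ℝ))
    refine tendsto_atTop_mono (fun k => ?_) hcomp
    exact le_trans (hqmono _ _ (le_abs_self (k:ℝ))) (hb k)

/-- Fix an index `j` with `n_j ∈ ℕ` and suppose
`2(sup h_j - inf h_j) < |∫₀^{2π} p_j(t) e^{i n_j t} dt|`. Then, along every solution of the
system, `x_j(2kπ)² + x_j'(2kπ)² → +∞` as the integer `|k| → +∞`. -/
theorem discrete_unboundedness_of_global_condition
    (d : ℕ) (n : Fin d → ℝ) (h : Fin d → (Fin d → ℝ) → ℝ) (p : Fin d → ℝ → ℝ)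
    (hn : ∀ j, 0 < n j)
    (hLip : ∀ j, LocallyLipschitz (h j))
    (hbd : ∀ j, ∃ M, ∀ y, |h j y| ≤ M)
    (hp : ∀ j, Continuous (p j))
    (hper : ∀ j, Function.Periodic (p j) (2 * Real.pi))
    (x x' x'' : Fin d → ℝ → ℝ)
    (hx' : ∀ j t, HasDerivAt (x j) (x' j t) t)
    (hx'' : ∀ j t, HasDerivAt (x' j) (x'' j t) t)
    (hsol : ∀ j t, x'' j t + (n j) ^ 2 * x j t + h j (fun i => x i t) = p j t)
    (j : Fin d) (m : ℕ) (hm : 0 < m) (hnj : n j = (m : ℝ))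
    (hres : 2 * ((⨆ y, h j y) - (⨅ y, h j y)) <
      ‖(∫ t in (0 : ℝ)..(2 * Real.pi),
        (p j t : ℂ) * Complex.exp (Complex.I * (n j : ℂ) * (t : ℂ)))‖) :
    Tendsto (fun k : ℤ => (x j (2 * k * Real.pi)) ^ 2 + (x' j (2 * k * Real.pi)) ^ 2)
      (cocompact ℤ) atTop := by
  have hπ : (0:ℝ) < Real.pi := Real.pi_pos
  have hm' : (0:ℝ) < m := by exact_mod_cast hm
  have hm1 : (1:ℝ) ≤ m := by exact_mod_cast hm
  -- continuity
  have hxc : ∀ i, Continuous (x i) := fun i =>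
    continuous_iff_continuousAt.2 fun t => (hx' i t).continuousAt
  have hx'c : Continuous (x' j) :=
    continuous_iff_continuousAt.2 fun t => (hx'' j t).continuousAt
  set g : ℝ → ℝ := fun t => h j (fun i => x i t) with hgdef
  have hgc : Continuous g := (hLip j).continuous.comp (continuous_pi fun i => hxc i)
  obtain ⟨M, hM⟩ := hbd j
  have hbdd : BddAbove (Set.range (h j)) := ⟨M, by rintro _ ⟨y, rfl⟩; exact (abs_le.1 (hM y)).2⟩
  have hbddb : BddBelow (Set.range (h j)) := ⟨-M, by rintro _ ⟨y, rfl⟩; exact (abs_le.1 (hM y)).1⟩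
  set A : ℝ := ⨆ y, h j y with hAdef
  set B : ℝ := ⨅ y, h j y with hBdef
  have hle : ∀ y, B ≤ h j y := fun y => ciInf_le hbddb y
  have hge : ∀ y, h j y ≤ A := fun y => le_ciSup hbdd y
  set c : ℝ := (A + B)/2 with hcdef
  set A₀ : ℝ := (A - B)/2 with hA₀def
  have hAB : B ≤ A := le_trans (hle (fun _ => 0)) (hge (fun _ => 0))
  have hA₀ : 0 ≤ A₀ := by rw [hA₀def]; linarith
  have hgb : ∀ t, |g t - c| ≤ A₀ := by
    intro t
    have h1 : B ≤ g t := hle _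
    have h2 : g t ≤ A := hge _
    rw [abs_le, hcdef, hA₀def]
    constructor <;> linarith
  -- complex setup
  set z : ℝ → ℂ := fun t => (x' j t : ℂ) - Complex.I * (m : ℂ) * (x j t : ℂ) with hzdef
  set w : ℝ → ℂ := fun t => Complex.exp (Complex.I * (m : ℂ) * (t : ℂ)) * z t with hwdef
  -- derivative of the exponential
  have hed : ∀ t : ℝ, HasDerivAt (fun u : ℝ => Complex.exp (Complex.I * (m : ℂ) * (u : ℂ)))
      (Complex.I * (m : ℂ) * Complex.exp (Complex.I * (m : ℂ) * (t : ℂ))) t := by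
    intro t
    have h1 : HasDerivAt (fun u : ℝ => Complex.I * (m : ℂ) * (u : ℂ))
        (Complex.I * (m : ℂ)) t := by
      simpa using ((hasDerivAt_id t).ofReal_comp).const_mul (Complex.I * (m : ℂ))
    simpa [mul_comm] using h1.cexp
  have hec : Continuous fun u : ℝ => Complex.exp (Complex.I * (m : ℂ) * (u : ℂ)) :=
    Complex.continuous_exp.comp (by continuity)
  have hzd : ∀ t : ℝ, HasDerivAt z
      ((x'' j t : ℂ) - Complex.I * (m : ℂ) * (x' j t : ℂ)) t := fun t =>
    ((hx'' j t).ofReal_comp).sub (((hx' j t).ofReal_comp).const_mul (Complex.I * (m : ℂ)))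
  have hwd : ∀ t : ℝ, HasDerivAt w
      (Complex.exp (Complex.I * (m : ℂ) * (t : ℂ)) * ((p j t - g t : ℝ) : ℂ)) t := by
    intro t
    have hprod := (hed t).mul (hzd t)
    have hode : ((x'' j t : ℝ) : ℂ)
        = ((p j t - g t : ℝ) : ℂ) - (m : ℂ)^2 * ((x j t : ℝ) : ℂ) := by
      have h0 := hsol j t
      rw [hnj] at h0
      have : x'' j t = (p j t - g t) - (m:ℝ)^2 * x j t := by
        simp only [hgdef]; linarith
      rw [this]; push_cast; ring
    refine hprod.congr_deriv ?_
    simp only [hzdef]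
    rw [hode]
    ring_nf
    rw [Complex.I_sq]
    ring
  have hintc : Continuous fun s : ℝ =>
      Complex.exp (Complex.I * (m : ℂ) * (s : ℂ)) * ((p j s - g s : ℝ) : ℂ) :=
    hec.mul (Complex.continuous_ofReal.comp ((hp j).sub hgc))
  have hftc : ∀ a b : ℝ, w b - w a
      = ∫ s in a..b, Complex.exp (Complex.I * (m : ℂ) * (s : ℂ)) * ((p j s - g s : ℝ) : ℂ) :=
    fun a b => (intervalIntegral.integral_eq_sub_of_hasDerivAt (fun t _ => hwd t)
      (hintc.intervalIntegrable a b)).symm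
  -- the forcing Fourier coefficient
  set W : ℂ := ∫ s in (0:ℝ)..2*Real.pi,
    Complex.exp (Complex.I * (m : ℂ) * (s : ℂ)) * ((p j s : ℝ) : ℂ) with hWdef
  have hexpper : ∀ s : ℝ, Complex.exp (Complex.I * (m : ℂ) * ((s + 2*Real.pi : ℝ) : ℂ))
      = Complex.exp (Complex.I * (m : ℂ) * (s : ℂ)) := by
    intro s
    rw [show Complex.I * (m : ℂ) * ((s + 2*Real.pi : ℝ) : ℂ)
        = Complex.I * (m : ℂ) * (s : ℂ) + (m : ℤ) * (2 * (Real.pi : ℂ) * Complex.I) by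
      push_cast; ring]
    rw [Complex.exp_add, Complex.exp_int_mul_two_pi_mul_I, mul_one]
  have hWk : ∀ a : ℝ, (∫ s in a..a+2*Real.pi,
      Complex.exp (Complex.I * (m : ℂ) * (s : ℂ)) * ((p j s : ℝ) : ℂ)) = W := by
    intro a
    have hper2 : Function.Periodic
        (fun s : ℝ => Complex.exp (Complex.I * (m : ℂ) * (s : ℂ)) * ((p j s : ℝ) : ℂ))
        (2*Real.pi) := by
      intro s
      simp only [hexpper s, hper j s]
    simpa using hper2.intervalIntegral_add_eq a 0
  have hexp0 : ∀ a : ℝ, (∫ s in a..a+2*Real.pi,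
      Complex.exp (Complex.I * (m : ℂ) * (s : ℂ))) = 0 := by
    intro a
    have hIm : Complex.I * (m : ℂ) ≠ 0 := by
      simp [Complex.I_ne_zero]
      exact_mod_cast hm.ne'
    have hd : ∀ s : ℝ, HasDerivAt
        (fun u : ℝ => (Complex.I * (m : ℂ))⁻¹ * Complex.exp (Complex.I * (m : ℂ) * (u : ℂ)))
        (Complex.exp (Complex.I * (m : ℂ) * (s : ℂ))) s := by
      intro s
      have := (hed s).const_mul (Complex.I * (m : ℂ))⁻¹
      refine this.congr_deriv ?_
      rw [← mul_assoc, inv_mul_cancel₀ hIm, one_mul]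
    rw [intervalIntegral.integral_eq_sub_of_hasDerivAt (fun s _ => hd s)
      (hec.intervalIntegrable _ _)]
    rw [hexpper a, sub_self]
  -- one-period step estimate
  set E : ℝ := 2*(A-B) with hEdef
  have hE4 : E = 4*A₀ := by rw [hEdef, hA₀def]; ring
  have hstep : ∀ a : ℝ, ‖w (a+2*Real.pi) - w a - W‖ ≤ E := by
    intro a
    rw [hftc a (a+2*Real.pi)]
    have hsplit : (∫ s in a..a+2*Real.pi,
        Complex.exp (Complex.I * (m : ℂ) * (s : ℂ)) * ((p j s - g s : ℝ) : ℂ))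
        = (∫ s in a..a+2*Real.pi,
            Complex.exp (Complex.I * (m : ℂ) * (s : ℂ)) * ((p j s : ℝ) : ℂ))
          - (∫ s in a..a+2*Real.pi,
            Complex.exp (Complex.I * (m : ℂ) * (s : ℂ)) * ((g s - c : ℝ) : ℂ))
          - (c : ℂ) * (∫ s in a..a+2*Real.pi,
            Complex.exp (Complex.I * (m : ℂ) * (s : ℂ))) := by
      have ip : IntervalIntegrable (fun s : ℝ => Complex.exp (Complex.I * (m:ℂ) * (s:ℂ))
          * ((p j s : ℝ):ℂ)) MeasureSpace.volume a (a+2*Real.pi) :=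
        Continuous.intervalIntegrable (by fun_prop) _ _
      have ig : IntervalIntegrable (fun s : ℝ => Complex.exp (Complex.I * (m:ℂ) * (s:ℂ))
          * ((g s - c : ℝ):ℂ)) MeasureSpace.volume a (a+2*Real.pi) :=
        Continuous.intervalIntegrable (by fun_prop) _ _
      have ie : IntervalIntegrable (fun s : ℝ => (c:ℂ) * Complex.exp (Complex.I * (m:ℂ) * (s:ℂ)))
          MeasureSpace.volume a (a+2*Real.pi) :=
        Continuous.intervalIntegrable (by fun_prop) _ _
      rw [← intervalIntegral.integral_const_mul, ← intervalIntegral.integral_sub ip ig,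
        ← intervalIntegral.integral_sub (ip.sub ig) ie]
      apply intervalIntegral.integral_congr
      intro s _
      push_cast
      ring
    rw [hsplit, hWk a, hexp0 a, mul_zero, sub_zero]
    rw [show W - (∫ s in a..a+2*Real.pi,
        Complex.exp (Complex.I * (m : ℂ) * (s : ℂ)) * ((g s - c : ℝ) : ℂ)) - W
      = -(∫ s in a..a+2*Real.pi,
        Complex.exp (Complex.I * (m : ℂ) * (s : ℂ)) * ((g s - c : ℝ) : ℂ)) by ring]
    rw [norm_neg, hE4]
    exact phase_bound m hm (fun s => g s - c) (hgc.sub continuous_const) A₀ hgb a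
  have hE0 : 0 ≤ E := by rw [hE4]; positivity
  have htel := telescope_bound w W E hE0 hstep
  have hWgt : E < ‖W‖ := by
    calc E < ‖(∫ t in (0:ℝ)..(2*Real.pi),
          (p j t : ℂ) * Complex.exp (Complex.I * ((n j : ℝ) : ℂ) * (t:ℂ)))‖ := hres
      _ = ‖W‖ := by
          rw [hWdef, hnj]
          congr 1
          apply intervalIntegral.integral_congr
          intro s _
          push_cast
          ring
  set δ : ℝ := ‖W‖ - E with hδdef
  have hδ : 0 < δ := by rw [hδdef]; linarith
  set C0 : ℝ := ‖w 0‖ with hC0def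
  have hlow : ∀ k : ℤ, |(k:ℝ)| * δ - C0 ≤ ‖w (2*(k:ℝ)*Real.pi)‖ := by
    intro k
    have h2 : ‖(k:ℤ) • W‖ = |(k:ℝ)| * ‖W‖ := by
      rw [norm_zsmul ℝ, Real.norm_eq_abs]
    have t2 : ‖(k:ℤ) • W‖ - ‖w 0‖ ≤ ‖w 0 + (k:ℤ) • W‖ := by
      have : ‖(k:ℤ) • W‖ = ‖(w 0 + (k:ℤ) • W) - w 0‖ := by congr 1; abel
      rw [this]
      have := norm_sub_le (w 0 + (k:ℤ) • W) (w 0)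
      linarith
    have t1 : ‖w 0 + (k:ℤ) • W‖ ≤ ‖w (2*(k:ℝ)*Real.pi)‖ + |(k:ℝ)| * E := by
      have he : ‖w 0 + (k:ℤ) • W‖
          = ‖w (2*(k:ℝ)*Real.pi) - (w (2*(k:ℝ)*Real.pi) - (w 0 + (k:ℤ) • W))‖ := by
        congr 1; abel
      rw [he]
      have := norm_sub_le (w (2*(k:ℝ)*Real.pi)) (w (2*(k:ℝ)*Real.pi) - (w 0 + (k:ℤ) • W))
      linarith [htel k]
    have hexp : |(k:ℝ)| * δ = |(k:ℝ)| * ‖W‖ - |(k:ℝ)| * E := by rw [hδdef]; ring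
    linarith
  have hzw : ∀ t : ℝ, ‖w t‖ = ‖z t‖ := by
    intro t
    rw [hwdef]
    simp only [norm_mul]
    have h1 : ‖Complex.exp (Complex.I * (m:ℂ) * (t:ℂ))‖ = 1 := by
      rw [Complex.norm_exp]
      simp [Complex.mul_re, Complex.mul_im]
    rw [h1, one_mul]
  have hzsq : ∀ t : ℝ, ‖z t‖^2 = (x' j t)^2 + (m:ℝ)^2 * (x j t)^2 := by
    intro t
    rw [hzdef, Complex.sq_norm]
    simp only [Complex.normSq_apply, Complex.sub_re, Complex.sub_im, Complex.ofReal_re,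
      Complex.ofReal_im, Complex.mul_re, Complex.mul_im, Complex.I_re, Complex.I_im,
      Complex.natCast_re, Complex.natCast_im]
    ring
  have hmm2 : (1:ℝ) ≤ (m:ℝ)^2 := by nlinarith
  have hbound : ∀ k : ℤ, (max (|(k:ℝ)| * δ - C0) 0)^2 / ((m:ℝ)^2)
      ≤ (x j (2*(k:ℝ)*Real.pi))^2 + (x' j (2*(k:ℝ)*Real.pi))^2 := by
    intro k
    have h1 : max (|(k:ℝ)| * δ - C0) 0 ≤ ‖z (2*(k:ℝ)*Real.pi)‖ :=
      max_le ((hzw _) ▸ hlow k) (norm_nonneg _)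
    have h2 : (max (|(k:ℝ)| * δ - C0) 0)^2 ≤ ‖z (2*(k:ℝ)*Real.pi)‖^2 :=
      pow_le_pow_left₀ (le_max_right _ _) h1 2
    rw [hzsq] at h2
    rw [div_le_iff₀ (by positivity)]
    nlinarith [sq_nonneg (x' j (2*(k:ℝ)*Real.pi)), sq_nonneg (x j (2*(k:ℝ)*Real.pi))]
  exact final_tendsto
    (fun k : ℤ => (x j (2*(k:ℝ)*Real.pi))^2 + (x' j (2*(k:ℝ)*Real.pi))^2)
    δ C0 ((m:ℝ)^2) hδ (by positivity) hbound
end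

section
/- Let A be a symmetric, positive definite d × d real matrix having n² as an eigenvalue for some n ∈ ℕ, and suppose there exists a nontrivial 2π-periodic solution v of the linear system v'' + Av = 0 such that sup|h| · ∫₀^{2π} |v(t)| dt < |∫₀^{2π} ⟨p(t), v(t)⟩ dt|. Then every solution x : ℝ → ℝ^d of x'' + Ax + h(x) = p(t) satisfies |x(t)|² + |x'(t)|² → +∞ as |t| → +∞. -/
open Real Filter MeasureTheory intervalIntegral

set_option maxHeartbeats 1000000
open Real Filter MeasureTheory intervalIntegral

private lemma abs_sum_mul_le' {d : ℕ} (f g : Fin d → ℝ) :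
    |∑ i, f i * g i| ≤ Real.sqrt (∑ i, f i ^ 2) * Real.sqrt (∑ i, g i ^ 2) := by
  have h1 : |∑ i, f i * g i| ≤ ∑ i, |f i| * |g i| := by
    calc |∑ i, f i * g i| ≤ ∑ i, |f i * g i| := Finset.abs_sum_le_sum_abs _ _
    _ = ∑ i, |f i| * |g i| := by simp [abs_mul]
  have h2 := Real.sum_mul_le_sqrt_mul_sqrt Finset.univ (fun i => |f i|) (fun i => |g i|)
  simp only [sq_abs] at h2
  exact h1.trans h2

private lemma aux_unbounded
    (d : ℕ) (A : Matrix (Fin d) (Fin d) ℝ) (hAsymm : A.IsSymm)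
    (h : (Fin d → ℝ) → (Fin d → ℝ)) (hcont : Continuous h)
    (hbd : ∃ M, ∀ y, Real.sqrt (∑ i, (h y i) ^ 2) ≤ M)
    (p : ℝ → Fin d → ℝ) (hp : Continuous p)
    (hper : Function.Periodic p (2 * Real.pi))
    (v v' v'' : ℝ → Fin d → ℝ)
    (hv' : ∀ i t, HasDerivAt (fun s => v s i) (v' t i) t)
    (hv'' : ∀ i t, HasDerivAt (fun s => v' s i) (v'' t i) t)
    (hveq : ∀ t, v'' t + A.mulVec (v t) = 0)
    (hvper : Function.Periodic v (2 * Real.pi))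
    (hcond : (⨆ y, Real.sqrt (∑ i, (h y i) ^ 2))
        * (∫ t in (0 : ℝ)..(2 * Real.pi), Real.sqrt (∑ i, (v t i) ^ 2))
      < ∫ t in (0 : ℝ)..(2 * Real.pi), ∑ i, p t i * v t i)
    (x x' x'' : ℝ → Fin d → ℝ)
    (hx' : ∀ i t, HasDerivAt (fun s => x s i) (x' t i) t)
    (hx'' : ∀ i t, HasDerivAt (fun s => x' s i) (x'' t i) t)
    (hsol : ∀ t, x'' t + A.mulVec (x t) + h (x t) = p t) :
    Tendsto (fun t => (∑ i, (x t i) ^ 2) + (∑ i, (x' t i) ^ 2)) (cocompact ℝ) atTop := by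
  have h2pi : (0:ℝ) < 2 * Real.pi := by positivity
  set M : ℝ := ⨆ y, Real.sqrt (∑ i, (h y i) ^ 2) with hMdef
  obtain ⟨M₀, hM₀⟩ := hbd
  have hMbdd : BddAbove (Set.range fun y => Real.sqrt (∑ i, (h y i) ^ 2)) :=
    ⟨M₀, by rintro _ ⟨y, rfl⟩; exact hM₀ y⟩
  have hMle : ∀ y, Real.sqrt (∑ i, (h y i) ^ 2) ≤ M := fun y => le_ciSup hMbdd y
  have hM0 : 0 ≤ M := le_trans (Real.sqrt_nonneg _) (hMle 0)
  set nv : ℝ → ℝ := fun t => Real.sqrt (∑ i, (v t i) ^ 2) with hnvdef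
  set J : ℝ := ∫ t in (0:ℝ)..(2*Real.pi), nv t with hJdef
  set I : ℝ := ∫ t in (0:ℝ)..(2*Real.pi), ∑ i, p t i * v t i with hIdef
  -- continuity facts
  have hxc : ∀ i, Continuous fun t => x t i := fun i =>
    continuous_iff_continuousAt.2 fun t => (hx' i t).continuousAt
  have hx'c : ∀ i, Continuous fun t => x' t i := fun i =>
    continuous_iff_continuousAt.2 fun t => (hx'' i t).continuousAt
  have hvc : ∀ i, Continuous fun t => v t i := fun i =>
    continuous_iff_continuousAt.2 fun t => (hv' i t).continuousAt
  have hv'c : ∀ i, Continuous fun t => v' t i := fun i =>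
    continuous_iff_continuousAt.2 fun t => (hv'' i t).continuousAt
  have hxC : Continuous x := continuous_pi hxc
  have hhx : ∀ i, Continuous fun t => h (x t) i := fun i =>
    (continuous_apply i).comp (hcont.comp hxC)
  have hpvc : Continuous fun t => ∑ i, p t i * v t i :=
    continuous_finset_sum _ fun i _ => ((continuous_apply i).comp hp).mul (hvc i)
  have hhvc : Continuous fun t => ∑ i, h (x t) i * v t i :=
    continuous_finset_sum _ fun i _ => (hhx i).mul (hvc i)
  have hnvc : Continuous nv :=
    (continuous_finset_sum _ fun i _ => (hvc i).pow 2).sqrt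
  set W : ℝ → ℝ := fun t => (∑ i, x' t i * v t i) - ∑ i, x t i * v' t i with hWdef
  have hWc : Continuous W :=
    (continuous_finset_sum _ fun i _ => (hx'c i).mul (hvc i)).sub
      (continuous_finset_sum _ fun i _ => (hxc i).mul (hv'c i))
  -- symmetry
  have hsym : ∀ t, ∑ i, (A.mulVec (x t)) i * v t i = ∑ i, x t i * (A.mulVec (v t)) i := by
    intro t
    have h1 : dotProduct (A.mulVec (x t)) (v t)
        = dotProduct (x t) (A.mulVec (v t)) := by
      rw [dotProduct_comm, Matrix.dotProduct_mulVec, ← Matrix.mulVec_transpose, hAsymm.eq,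
        dotProduct_comm]
    simpa [dotProduct] using h1
  -- derivative of W
  have hW : ∀ t, HasDerivAt W ((∑ i, p t i * v t i) - ∑ i, h (x t) i * v t i) t := by
    intro t
    have h1 : HasDerivAt (fun s => ∑ i, x' s i * v s i)
        (∑ i, (x'' t i * v t i + x' t i * v' t i)) t :=
      HasDerivAt.fun_sum fun i _ => (hx'' i t).mul (hv' i t)
    have h2 : HasDerivAt (fun s => ∑ i, x s i * v' s i)
        (∑ i, (x' t i * v' t i + x t i * v'' t i)) t :=
      HasDerivAt.fun_sum fun i _ => (hx' i t).mul (hv'' i t)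
    have h3 := h1.sub h2
    refine h3.congr_deriv ?_
    have hxe : ∀ i, x'' t i = p t i - (A.mulVec (x t)) i - h (x t) i := by
      intro i
      have := congrFun (hsol t) i
      simp only [Pi.add_apply] at this
      linarith
    have hve : ∀ i, v'' t i = -(A.mulVec (v t)) i := by
      intro i
      have := congrFun (hveq t) i
      simp only [Pi.add_apply, Pi.zero_apply] at this
      linarith
    have e1 : ∑ i, x'' t i * v t i
        = (∑ i, p t i * v t i) - (∑ i, (A.mulVec (x t)) i * v t i)
          - ∑ i, h (x t) i * v t i := by
      simp_rw [hxe, sub_mul]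
      rw [Finset.sum_sub_distrib, Finset.sum_sub_distrib]
    have e2 : ∑ i, x t i * v'' t i = -∑ i, x t i * (A.mulVec (v t)) i := by
      simp_rw [hve, mul_neg]
      rw [Finset.sum_neg_distrib]
    rw [Finset.sum_add_distrib, Finset.sum_add_distrib, e1, e2]
    have := hsym t
    linarith
  -- increment formula
  have hpvper : Function.Periodic (fun s => ∑ i, p s i * v s i) (2*Real.pi) := by
    intro s
    simp only [hper s, hvper s]
  have hnvper : Function.Periodic nv (2*Real.pi) := by
    intro s
    simp only [hnvdef, hvper s]
  have hE : ∀ t, W (t + 2*Real.pi) - W t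
      = I - ∫ s in t..(t+2*Real.pi), ∑ i, h (x s) i * v s i := by
    intro t
    have hint : (∫ s in t..(t+2*Real.pi),
        ((∑ i, p s i * v s i) - ∑ i, h (x s) i * v s i)) = W (t+2*Real.pi) - W t :=
      intervalIntegral.integral_eq_sub_of_hasDerivAt (fun s _ => hW s)
        ((hpvc.sub hhvc).intervalIntegrable _ _)
    rw [← hint, intervalIntegral.integral_sub (hpvc.intervalIntegrable _ _)
      (hhvc.intervalIntegrable _ _)]
    congr 1
    have := hpvper.intervalIntegral_add_eq t 0
    rw [this]
    simp [hIdef]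
  -- bound on the perturbation integral
  have hEbd : ∀ t, |∫ s in t..(t+2*Real.pi), ∑ i, h (x s) i * v s i| ≤ M * J := by
    intro t
    have hle : ∀ s, |∑ i, h (x s) i * v s i| ≤ M * nv s := by
      intro s
      refine (abs_sum_mul_le' _ _).trans ?_
      exact mul_le_mul_of_nonneg_right (hMle _) (Real.sqrt_nonneg _)
    have habs := intervalIntegral.abs_integral_le_integral_abs
      (μ := volume) (f := fun s => ∑ i, h (x s) i * v s i) (a := t) (b := t + 2*Real.pi) (by linarith)
    have hmono : (∫ s in t..(t+2*Real.pi), |∑ i, h (x s) i * v s i|)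
        ≤ ∫ s in t..(t+2*Real.pi), M * nv s :=
      intervalIntegral.integral_mono_on (by linarith) (hhvc.abs.intervalIntegrable _ _)
        ((continuous_const.mul hnvc).intervalIntegrable _ _) (fun s _ => hle s)
    have heq : (∫ s in t..(t+2*Real.pi), M * nv s) = M * J := by
      rw [intervalIntegral.integral_const_mul]
      congr 1
      have := hnvper.intervalIntegral_add_eq t 0
      rw [this]
      simp [hJdef]
    calc |∫ s in t..(t+2*Real.pi), ∑ i, h (x s) i * v s i| ≤ _ := habs
      _ ≤ _ := hmono
      _ = M * J := heq
  have hc : 0 < I - M * J := by linarith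
  have hinc : ∀ t, W t + (I - M*J) ≤ W (t + 2*Real.pi) := by
    intro t
    have h1 := hE t
    have h2 := abs_le.1 (hEbd t)
    linarith [h2.1, h2.2]
  have hiter : ∀ (s : ℝ) (k : ℕ), W s + k * (I - M*J) ≤ W (s + 2*Real.pi * k) := by
    intro s k
    induction k with
    | zero => simp
    | succ k ih =>
      have h1 := hinc (s + 2*Real.pi*k)
      have h3 : s + 2*Real.pi*(k:ℝ) + 2*Real.pi = s + 2*Real.pi*(((k+1):ℕ):ℝ) := by
        push_cast; ring
      rw [h3] at h1
      have h4 : (((k+1):ℕ):ℝ) = (k:ℝ)+1 := by push_cast; ring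
      rw [h4] at h1 ⊢
      linarith
  -- v' is periodic
  have hv'per : ∀ i t, v' (t + 2*Real.pi) i = v' t i := by
    intro i t
    have hA : HasDerivAt (fun s : ℝ => v (s + 2*Real.pi) i) (v' (t + 2*Real.pi) i) t := by
      have := (hv' i (t + 2*Real.pi)).comp t ((hasDerivAt_id t).add_const (2*Real.pi))
      exact this.congr_deriv (mul_one _)
    have hB : HasDerivAt (fun s : ℝ => v (s + 2*Real.pi) i) (v' t i) t := by
      have he : (fun s : ℝ => v (s + 2*Real.pi) i) = fun s => v s i := by
        funext s; rw [hvper s]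
      rw [he]; exact hv' i t
    exact hA.unique hB
  set nv' : ℝ → ℝ := fun t => Real.sqrt (∑ i, (v' t i) ^ 2) with hnv'def
  have hnv'c : Continuous nv' :=
    (continuous_finset_sum _ fun i _ => (hv'c i).pow 2).sqrt
  have hnv'per : Function.Periodic nv' (2*Real.pi) := by
    intro s
    simp only [hnv'def]
    congr 1
    exact Finset.sum_congr rfl fun i _ => by rw [hv'per i s]  -- ok now
  -- bound on nv, nv' over one period, hence everywhere
  obtain ⟨B₀, hB₀⟩ := (isCompact_Icc (a := (0:ℝ)) (b := 2*Real.pi)).exists_bound_of_continuousOn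
    (f := fun s => nv s + nv' s) ((hnvc.add hnv'c).continuousOn)
  have hnvB : ∀ t, nv t ≤ B₀ ∧ nv' t ≤ B₀ := by
    intro t
    constructor
    · obtain ⟨s, hs, he⟩ := hnvper.exists_mem_Ico₀ h2pi t
      rw [he]
      have := hB₀ s ⟨hs.1, hs.2.le⟩
      have h2 := abs_le.1 (by simpa [Real.norm_eq_abs] using this)
      have : (0:ℝ) ≤ nv' s := Real.sqrt_nonneg _
      linarith [h2.2]
    · obtain ⟨s, hs, he⟩ := hnv'per.exists_mem_Ico₀ h2pi t
      rw [he]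
      have := hB₀ s ⟨hs.1, hs.2.le⟩
      have h2 := abs_le.1 (by simpa [Real.norm_eq_abs] using this)
      have : (0:ℝ) ≤ nv s := Real.sqrt_nonneg _
      linarith [h2.2]
  have hB₀0 : 0 ≤ B₀ := le_trans (Real.sqrt_nonneg _) (hnvB 0).1
  -- |W| controlled by energy
  set B : ℝ := 2 * B₀^2 + 1 with hBdef
  have hBpos : 0 < B := by positivity
  have hWF : ∀ t, (W t)^2 ≤ B * ((∑ i, (x t i) ^ 2) + (∑ i, (x' t i) ^ 2)) := by
    intro t
    have h1 : |∑ i, x' t i * v t i| ≤ Real.sqrt (∑ i, (x' t i)^2) * nv t :=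
      abs_sum_mul_le' _ _
    have h2 : |∑ i, x t i * v' t i| ≤ Real.sqrt (∑ i, (x t i)^2) * nv' t :=
      abs_sum_mul_le' _ _
    set a := Real.sqrt (∑ i, (x' t i)^2) with hadef
    set b := Real.sqrt (∑ i, (x t i)^2) with hbdef
    have ha0 : 0 ≤ a := Real.sqrt_nonneg _
    have hb0 : 0 ≤ b := Real.sqrt_nonneg _
    have ha2 : a^2 = ∑ i, (x' t i)^2 :=
      Real.sq_sqrt (Finset.sum_nonneg fun i _ => sq_nonneg _)
    have hb2 : b^2 = ∑ i, (x t i)^2 :=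
      Real.sq_sqrt (Finset.sum_nonneg fun i _ => sq_nonneg _)
    have hWle : |W t| ≤ B₀ * (a + b) := by
      have := (hnvB t).1
      have := (hnvB t).2
      have hnv0 : 0 ≤ nv t := Real.sqrt_nonneg _
      have hnv'0 : 0 ≤ nv' t := Real.sqrt_nonneg _
      calc |W t| ≤ |∑ i, x' t i * v t i| + |∑ i, x t i * v' t i| := abs_sub _ _
        _ ≤ a * nv t + b * nv' t := add_le_add h1 h2
        _ ≤ a * B₀ + b * B₀ := add_le_add
            (mul_le_mul_of_nonneg_left (hnvB t).1 ha0)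
            (mul_le_mul_of_nonneg_left (hnvB t).2 hb0)
        _ = B₀ * (a + b) := by ring
    have habs : (W t)^2 ≤ (B₀ * (a + b))^2 := by
      have := abs_nonneg (W t)
      nlinarith [sq_abs (W t)]
    nlinarith [sq_nonneg (a - b), sq_nonneg (a + b), ha2, hb2]
  -- growth of W at ±∞
  have hWtop : Tendsto W atTop atTop := by
    rw [tendsto_atTop]
    intro b
    obtain ⟨K, hK⟩ := (isCompact_Icc (a := (0:ℝ)) (b := 2*Real.pi)).exists_bound_of_continuousOn
      hWc.continuousOn
    obtain ⟨N, hN⟩ := exists_nat_ge ((b + K) / (I - M*J))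
    filter_upwards [eventually_ge_atTop (2*Real.pi*(N:ℝ))] with t ht
    have ht0 : 0 ≤ t := le_trans (by positivity) ht
    set k := ⌊t/(2*Real.pi)⌋₊ with hkdef
    have hk1 : (k:ℝ) ≤ t/(2*Real.pi) := Nat.floor_le (by positivity)
    have hk2 : t/(2*Real.pi) < (k:ℝ) + 1 := Nat.lt_floor_add_one _
    have hs0 : 0 ≤ t - 2*Real.pi*k := by
      have := (le_div_iff₀ h2pi).1 hk1
      linarith [this]
    have hs2 : t - 2*Real.pi*k ≤ 2*Real.pi := by
      have := (div_lt_iff₀ h2pi).1 hk2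
      nlinarith
    have hit := hiter (t - 2*Real.pi*k) k
    have e : t - 2*Real.pi*k + 2*Real.pi*k = t := by ring
    rw [e] at hit
    have hKs : |W (t - 2*Real.pi*k)| ≤ K := by
      simpa [Real.norm_eq_abs] using hK _ ⟨hs0, hs2⟩
    have hkN : (N:ℝ) ≤ (k:ℝ) := by
      have h1 : (N:ℝ) ≤ t/(2*Real.pi) := (le_div_iff₀ h2pi).2 (by linarith)
      exact_mod_cast Nat.le_floor h1
    have hNc : b + K ≤ (N:ℝ) * (I - M*J) := (div_le_iff₀ hc).1 hN
    have hkc : (N:ℝ) * (I - M*J) ≤ (k:ℝ) * (I - M*J) :=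
      mul_le_mul_of_nonneg_right hkN hc.le
    have := abs_le.1 hKs
    linarith [this.1]
  have hWbot : Tendsto W atBot atBot := by
    rw [tendsto_atBot]
    intro b
    obtain ⟨K, hK⟩ := (isCompact_Icc (a := (0:ℝ)) (b := 2*Real.pi)).exists_bound_of_continuousOn
      hWc.continuousOn
    obtain ⟨N, hN⟩ := exists_nat_ge ((K - b) / (I - M*J))
    filter_upwards [eventually_le_atBot (-(2*Real.pi*((N:ℝ)+1)))] with t ht
    set k := ⌈-t/(2*Real.pi)⌉₊ with hkdef
    have h2piN : (0:ℝ) ≤ 2*Real.pi*((N:ℝ)+1) := by positivity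
    have htneg : t ≤ 0 := by linarith
    have hk1 : -t/(2*Real.pi) ≤ (k:ℝ) := Nat.le_ceil _
    have hk2 : (k:ℝ) < -t/(2*Real.pi) + 1 :=
      Nat.ceil_lt_add_one (div_nonneg (by linarith) h2pi.le)
    have hd1 := (div_le_iff₀ h2pi).1 hk1
    have hs0 : 0 ≤ t + 2*Real.pi*k := by linarith
    have hd2 : ((k:ℝ) - 1) * (2*Real.pi) < -t :=
      (lt_div_iff₀ h2pi).1 (by linarith)
    have hs2 : t + 2*Real.pi*k ≤ 2*Real.pi := by nlinarith
    have hNk : (N:ℝ) ≤ (k:ℝ) := by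
      have h1 : ((N:ℝ)+1) * (2*Real.pi) ≤ -t := by linarith
      have h2 : (N:ℝ)+1 ≤ -t/(2*Real.pi) := (le_div_iff₀ h2pi).2 h1
      linarith
    have hit := hiter t k
    have hKs : |W (t + 2*Real.pi*k)| ≤ K := by
      simpa [Real.norm_eq_abs] using hK _ ⟨hs0, hs2⟩
    have hNc : K - b ≤ (N:ℝ) * (I - M*J) := (div_le_iff₀ hc).1 hN
    have hkc : (N:ℝ) * (I - M*J) ≤ (k:ℝ) * (I - M*J) :=
      mul_le_mul_of_nonneg_right hNk hc.le
    have := abs_le.1 hKs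
    linarith [this.2]
  -- conclusion
  have hWcc : Tendsto (fun t => |W t|) (cocompact ℝ) atTop := by
    rw [cocompact_eq_atBot_atTop, tendsto_sup]
    exact ⟨tendsto_abs_atBot_atTop.comp hWbot, tendsto_abs_atTop_atTop.comp hWtop⟩
  have hsq : Tendsto (fun r : ℝ => r^2 / B) atTop atTop :=
    Tendsto.atTop_div_const hBpos (tendsto_pow_atTop (by norm_num))
  refine tendsto_atTop_mono ?_ (hsq.comp hWcc)
  intro t
  have h1 := hWF t
  have h2 : |W t|^2 = (W t)^2 := sq_abs _
  show |W t|^2 / B ≤ _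
  rw [div_le_iff₀ hBpos, h2]
  linarith [h1, mul_comm B ((∑ i, (x t i) ^ 2) + (∑ i, (x' t i) ^ 2))]

/-- Let `A` be a symmetric positive definite `d × d` matrix having `n²` as an eigenvalue for
some `n ∈ ℕ`, and suppose there is a nontrivial `2π`-periodic solution `v` of `v'' + Av = 0`
with `sup|h| ⬝ ∫₀^{2π} |v(t)| dt < |∫₀^{2π} ⟨p(t), v(t)⟩ dt|`.  Then every solution of
`x'' + Ax + h(x) = p(t)` satisfies `|x(t)|² + |x'(t)|² → +∞` as `|t| → +∞`. -/
theorem unbounded_of_global_condition_matrix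
    (d : ℕ) (A : Matrix (Fin d) (Fin d) ℝ) (hAsymm : A.IsSymm) (hApd : A.PosDef)
    (m : ℕ) (hm : 0 < m)
    (heig : ∃ u : Fin d → ℝ, u ≠ 0 ∧ A.mulVec u = ((m : ℝ) ^ 2) • u)
    (h : (Fin d → ℝ) → (Fin d → ℝ)) (hLip : LocallyLipschitz h)
    (hbd : ∃ M, ∀ y, Real.sqrt (∑ i, (h y i) ^ 2) ≤ M)
    (p : ℝ → Fin d → ℝ) (hp : Continuous p) (hper : Function.Periodic p (2 * Real.pi))
    (v v' v'' : ℝ → Fin d → ℝ)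
    (hv' : ∀ i t, HasDerivAt (fun s => v s i) (v' t i) t)
    (hv'' : ∀ i t, HasDerivAt (fun s => v' s i) (v'' t i) t)
    (hveq : ∀ t, v'' t + A.mulVec (v t) = 0)
    (hvper : Function.Periodic v (2 * Real.pi))
    (hvnontriv : v ≠ 0)
    (hcond : (⨆ y, Real.sqrt (∑ i, (h y i) ^ 2))
        * (∫ t in (0 : ℝ)..(2 * Real.pi), Real.sqrt (∑ i, (v t i) ^ 2))
      < |∫ t in (0 : ℝ)..(2 * Real.pi), ∑ i, p t i * v t i|)
    (x x' x'' : ℝ → Fin d → ℝ)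
    (hx' : ∀ i t, HasDerivAt (fun s => x s i) (x' t i) t)
    (hx'' : ∀ i t, HasDerivAt (fun s => x' s i) (x'' t i) t)
    (hsol : ∀ t, x'' t + A.mulVec (x t) + h (x t) = p t) :
    Tendsto (fun t => (∑ i, (x t i) ^ 2) + (∑ i, (x' t i) ^ 2)) (cocompact ℝ) atTop := by
  have hconth : Continuous h := hLip.continuous
  set I : ℝ := ∫ t in (0:ℝ)..(2*Real.pi), ∑ i, p t i * v t i with hIdef
  rcases lt_or_ge 0 I with hI | hI
  · exact aux_unbounded d A hAsymm h hconth hbd p hp hper v v' v'' hv' hv'' hveq hvper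
      (by rwa [abs_of_pos hI] at hcond) x x' x'' hx' hx'' hsol
  · have habs : |I| = -I := abs_of_nonpos hI
    refine aux_unbounded d A hAsymm h hconth hbd p hp hper
      (fun t => -(v t)) (fun t => -(v' t)) (fun t => -(v'' t)) ?_ ?_ ?_ ?_ ?_
      x x' x'' hx' hx'' hsol
    · intro i t
      have := (hv' i t).neg
      exact this
    · intro i t
      have := (hv'' i t).neg
      exact this
    · intro t
      show -(v'' t) + A.mulVec (-(v t)) = 0
      rw [Matrix.mulVec_neg, ← neg_add, hveq t, neg_zero]
    · intro t
      show -(v (t + 2*Real.pi)) = -(v t)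
      rw [hvper t]
    · have e1 : (∫ t in (0:ℝ)..(2*Real.pi), Real.sqrt (∑ i, ((-(v t)) i) ^ 2))
          = ∫ t in (0:ℝ)..(2*Real.pi), Real.sqrt (∑ i, (v t i) ^ 2) := by
        congr 1
        funext t
        congr 1
        exact Finset.sum_congr rfl fun i _ => by simp
      have e2 : (∫ t in (0:ℝ)..(2*Real.pi), ∑ i, p t i * (-(v t)) i)
          = -I := by
        rw [hIdef, ← intervalIntegral.integral_neg]
        congr 1
        funext t
        simp
      rw [e1, e2]
      rw [habs] at hcond
      exact hcond
end

section
/- Let A be a symmetric, positive definite d × d real matrix, let v be a nontrivial 2π-periodic solution of v'' + Av = 0, and set Γ' = |∫₀^{2π} ⟨p(t), v(t)⟩ dt| − sup|h| · ∫₀^{2π} |v(t)| dt. Assume that the sign of v is chosen so that ∫₀^{2π} ⟨p(t), v(t)⟩ dt ≥ 0, and define V(ζ,η) = ⟨η, v(0)⟩ − ⟨ζ, v'(0)⟩ for (ζ,η) ∈ ℝ^d × ℝ^d. Then for every solution x of x'' + Ax + h(x) = p(t) and every positive integer k, V(x(2kπ), x'(2kπ)) − V(x(0), x'(0)) ≥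 kΓ'. -/
open Real Filter MeasureTheory intervalIntegral

/-- Let `A` be a symmetric positive definite `d × d` matrix, `v` a nontrivial `2π`-periodic
solution of `v'' + Av = 0` with `∫₀^{2π} ⟨p(t), v(t)⟩ dt ≥ 0`, and set
`Γ' = |∫₀^{2π} ⟨p(t), v(t)⟩ dt| - sup|h| ⬝ ∫₀^{2π} |v(t)| dt` and
`V(ζ,η) = ⟨η, v(0)⟩ - ⟨ζ, v'(0)⟩`.  Then along every solution of `x'' + Ax + h(x) = p(t)`,
`V(x(2kπ), x'(2kπ)) - V(x(0), x'(0)) ≥ kΓ'` for every positive integer `k`. -/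
theorem lyapunov_growth_matrix
    (d : ℕ) (A : Matrix (Fin d) (Fin d) ℝ) (hAsymm : A.IsSymm) (hApd : A.PosDef)
    (h : (Fin d → ℝ) → (Fin d → ℝ)) (hLip : LocallyLipschitz h)
    (hbd : ∃ M, ∀ y, Real.sqrt (∑ i, (h y i) ^ 2) ≤ M)
    (p : ℝ → Fin d → ℝ) (hp : Continuous p) (hper : Function.Periodic p (2 * Real.pi))
    (v v' v'' : ℝ → Fin d → ℝ)
    (hv' : ∀ i t, HasDerivAt (fun s => v s i) (v' t i) t)
    (hv'' : ∀ i t, HasDerivAt (fun s => v' s i) (v'' t i) t)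
    (hveq : ∀ t, v'' t + A.mulVec (v t) = 0)
    (hvper : Function.Periodic v (2 * Real.pi))
    (hvnontriv : v ≠ 0)
    (hsign : 0 ≤ ∫ t in (0 : ℝ)..(2 * Real.pi), ∑ i, p t i * v t i)
    (Γ' : ℝ)
    (hΓ' : Γ' = |∫ t in (0 : ℝ)..(2 * Real.pi), ∑ i, p t i * v t i|
      - (⨆ y, Real.sqrt (∑ i, (h y i) ^ 2))
        * (∫ t in (0 : ℝ)..(2 * Real.pi), Real.sqrt (∑ i, (v t i) ^ 2)))
    (V : (Fin d → ℝ) → (Fin d → ℝ) → ℝ)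
    (hV : ∀ ζ η, V ζ η = (∑ i, η i * v 0 i) - (∑ i, ζ i * v' 0 i))
    (x x' x'' : ℝ → Fin d → ℝ)
    (hx' : ∀ i t, HasDerivAt (fun s => x s i) (x' t i) t)
    (hx'' : ∀ i t, HasDerivAt (fun s => x' s i) (x'' t i) t)
    (hsol : ∀ t, x'' t + A.mulVec (x t) + h (x t) = p t) :
    ∀ k : ℕ, 0 < k →
      V (x (2 * k * Real.pi)) (x' (2 * k * Real.pi)) - V (x 0) (x' 0) ≥ k * Γ' := by
  intro k hk
  set T : ℝ := 2 * Real.pi with hTdef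
  -- continuity of everything
  have hxc : Continuous x := continuous_pi fun i =>
    continuous_iff_continuousAt.mpr fun t => (hx' i t).continuousAt
  have hx'c : Continuous x' := continuous_pi fun i =>
    continuous_iff_continuousAt.mpr fun t => (hx'' i t).continuousAt
  have hvc : Continuous v := continuous_pi fun i =>
    continuous_iff_continuousAt.mpr fun t => (hv' i t).continuousAt
  have hv'c : Continuous v' := continuous_pi fun i =>
    continuous_iff_continuousAt.mpr fun t => (hv'' i t).continuousAt
  set fP : ℝ → ℝ := fun t => ∑ i, p t i * v t i with hfPdef
  set fH : ℝ → ℝ := fun t => ∑ i, h (x t) i * v t i with hfHdef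
  set nv : ℝ → ℝ := fun t => Real.sqrt (∑ i, (v t i) ^ 2) with hnvdef
  set M : ℝ := ⨆ y, Real.sqrt (∑ i, (h y i) ^ 2) with hMdef
  set W : ℝ → ℝ := fun t => (∑ i, x' t i * v t i) - ∑ i, x t i * v' t i with hWdef
  have hfPc : Continuous fP := continuous_finset_sum _ fun i _ =>
    ((continuous_apply i).comp hp).mul ((continuous_apply i).comp hvc)
  have hfHc : Continuous fH := continuous_finset_sum _ fun i _ =>
    ((continuous_apply i).comp (hLip.continuous.comp hxc)).mul ((continuous_apply i).comp hvc)
  have hnvc : Continuous nv := Real.continuous_sqrt.comp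
    (continuous_finset_sum _ fun i _ => ((continuous_apply i).comp hvc).pow 2)
  -- symmetric bilinear form
  have hsymA : ∀ u w : Fin d → ℝ,
      (∑ i, A.mulVec u i * w i) = ∑ i, u i * A.mulVec w i := by
    intro u w
    simp only [Matrix.mulVec, dotProduct, Finset.sum_mul, Finset.mul_sum]
    rw [Finset.sum_comm]
    refine Finset.sum_congr rfl fun j _ => Finset.sum_congr rfl fun i _ => ?_
    have hA : A i j = A j i := (congrFun (congrFun hAsymm j) i).symm ▸ rfl
    rw [show A j i = A i j from (congrFun (congrFun hAsymm i) j)]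
    ring
  -- equations
  have hx2 : ∀ t, x'' t = p t - A.mulVec (x t) - h (x t) := by
    intro t; rw [← hsol t]; ring_nf
  have hv2 : ∀ t, v'' t = -(A.mulVec (v t)) :=
    fun t => eq_neg_of_add_eq_zero_left (hveq t)
  -- derivative of W
  have hW : ∀ t, HasDerivAt W (fP t - fH t) t := by
    intro t
    have h1 : HasDerivAt (fun s => ∑ i, x' s i * v s i)
        (∑ i, (x'' t i * v t i + x' t i * v' t i)) t :=
      HasDerivAt.fun_sum fun i _ => (hx'' i t).mul (hv' i t)
    have h2 : HasDerivAt (fun s => ∑ i, x s i * v' s i)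
        (∑ i, (x' t i * v' t i + x t i * v'' t i)) t :=
      HasDerivAt.fun_sum fun i _ => (hx' i t).mul (hv'' i t)
    have h3 := h1.fun_sub h2
    refine h3.congr_deriv ?_
    rw [Finset.sum_add_distrib, Finset.sum_add_distrib]
    have e1 : (∑ i, x'' t i * v t i)
        = fP t - (∑ i, A.mulVec (x t) i * v t i) - fH t := by
      rw [hx2 t]
      simp only [Pi.sub_apply, sub_mul, Finset.sum_sub_distrib, hfPdef, hfHdef]
    have e2 : (∑ i, x t i * v'' t i) = -∑ i, x t i * A.mulVec (v t) i := by
      rw [hv2 t]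
      simp only [Pi.neg_apply, mul_neg, Finset.sum_neg_distrib]
    have e3 := hsymA (x t) (v t)
    rw [e1] at *
    linarith [e2, e3]
  -- FTC
  have hkT : 2 * (k : ℝ) * Real.pi = 0 + (k : ℤ) • T := by
    rw [hTdef, zsmul_eq_mul]; push_cast; ring
  have hFTC : ∫ t in (0:ℝ)..(2 * (k:ℝ) * Real.pi), (fP t - fH t)
      = W (2 * (k:ℝ) * Real.pi) - W 0 :=
    intervalIntegral.integral_eq_sub_of_hasDerivAt (fun t _ => hW t)
      ((hfPc.sub hfHc).intervalIntegrable _ _)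
  have hsplit : ∫ t in (0:ℝ)..(2 * (k:ℝ) * Real.pi), (fP t - fH t)
      = (∫ t in (0:ℝ)..(2 * (k:ℝ) * Real.pi), fP t)
        - ∫ t in (0:ℝ)..(2 * (k:ℝ) * Real.pi), fH t :=
    intervalIntegral.integral_sub (hfPc.intervalIntegrable _ _) (hfHc.intervalIntegrable _ _)
  -- periodicity
  have hfPper : Function.Periodic fP T := by
    intro t; simp only [hfPdef]; rw [hper t, hvper t]
  have hnvper : Function.Periodic nv T := by
    intro t; simp only [hnvdef]; rw [hvper t]
  have hIP : (∫ t in (0:ℝ)..(2 * (k:ℝ) * Real.pi), fP t)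
      = (k : ℝ) * ∫ t in (0:ℝ)..T, fP t := by
    rw [hkT, hfPper.intervalIntegral_add_zsmul_eq (k:ℤ) 0
      (fun a b => hfPc.intervalIntegrable a b)]
    simp
  have hInv : (∫ t in (0:ℝ)..(2 * (k:ℝ) * Real.pi), nv t)
      = (k : ℝ) * ∫ t in (0:ℝ)..T, nv t := by
    rw [hkT, hnvper.intervalIntegral_add_zsmul_eq (k:ℤ) 0
      (fun a b => hnvc.intervalIntegrable a b)]
    simp
  -- bound on fH
  have hMle : ∀ y, Real.sqrt (∑ i, (h y i) ^ 2) ≤ M := by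
    obtain ⟨M0, hM0⟩ := hbd
    intro y
    exact le_ciSup ⟨M0, by rintro z ⟨y', rfl⟩; exact hM0 y'⟩ y
  have hMnn : 0 ≤ M := le_trans (Real.sqrt_nonneg _) (hMle 0)
  have hpt : ∀ t, fH t ≤ M * nv t := by
    intro t
    calc fH t ≤ Real.sqrt (∑ i, (h (x t) i) ^ 2) * Real.sqrt (∑ i, (v t i) ^ 2) :=
          Real.sum_mul_le_sqrt_mul_sqrt _ _ _
      _ ≤ M * nv t :=
          mul_le_mul_of_nonneg_right (hMle _) (Real.sqrt_nonneg _)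
  have hknn : (0:ℝ) ≤ 2 * (k:ℝ) * Real.pi := by positivity
  have hHb : (∫ t in (0:ℝ)..(2 * (k:ℝ) * Real.pi), fH t)
      ≤ ∫ t in (0:ℝ)..(2 * (k:ℝ) * Real.pi), M * nv t :=
    intervalIntegral.integral_mono_on hknn (hfHc.intervalIntegrable _ _)
      ((continuous_const.mul hnvc).intervalIntegrable _ _) (fun t _ => hpt t)
  have hHb2 : (∫ t in (0:ℝ)..(2 * (k:ℝ) * Real.pi), fH t)
      ≤ M * ((k:ℝ) * ∫ t in (0:ℝ)..T, nv t) := by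
    rw [← hInv]
    calc (∫ t in (0:ℝ)..(2 * (k:ℝ) * Real.pi), fH t)
        ≤ ∫ t in (0:ℝ)..(2 * (k:ℝ) * Real.pi), M * nv t := hHb
      _ = M * ∫ t in (0:ℝ)..(2 * (k:ℝ) * Real.pi), nv t :=
          intervalIntegral.integral_const_mul _ _
  -- periodicity of v'
  have hv'per : Function.Periodic v' T := by
    intro t; funext i
    have h1 : HasDerivAt (fun s => v (s + T) i) (v' (t + T) i) t :=
      HasDerivAt.comp_add_const t T (hv' i (t + T))
    have h2 : (fun s => v (s + T) i) = fun s => v s i :=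
      funext fun s => congrFun (hvper s) i
    rw [h2] at h1
    exact h1.unique (hv' i t)
  have hvk : v (2 * (k:ℝ) * Real.pi) = v 0 := by
    have := (hvper.nat_mul k) 0
    rw [zero_add] at this
    rw [show 2 * (k:ℝ) * Real.pi = (k : ℝ) * T by rw [hTdef]; ring]
    exact this
  have hv'k : v' (2 * (k:ℝ) * Real.pi) = v' 0 := by
    have := (hv'per.nat_mul k) 0
    rw [zero_add] at this
    rw [show 2 * (k:ℝ) * Real.pi = (k : ℝ) * T by rw [hTdef]; ring]
    exact this
  -- finish
  have habs : |∫ t in (0:ℝ)..T, fP t| = ∫ t in (0:ℝ)..T, fP t := abs_of_nonneg hsign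
  rw [hV, hV, hΓ']
  have hWk : W (2 * (k:ℝ) * Real.pi)
      = (∑ i, x' (2 * (k:ℝ) * Real.pi) i * v 0 i)
        - ∑ i, x (2 * (k:ℝ) * Real.pi) i * v' 0 i := by
    simp only [hWdef, hvk, hv'k]
  have hW0 : W 0 = (∑ i, x' 0 i * v 0 i) - ∑ i, x 0 i * v' 0 i := rfl
  have key : W (2 * (k:ℝ) * Real.pi) - W 0 ≥ (k:ℝ) *
      ((∫ t in (0:ℝ)..T, fP t) - M * ∫ t in (0:ℝ)..T, nv t) := by
    rw [← hFTC] at *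
    rw [hsplit, hIP]
    nlinarith [hHb2]
  rw [← habs] at key
  calc ((∑ i, x' (2 * (k:ℝ) * Real.pi) i * v 0 i)
        - ∑ i, x (2 * (k:ℝ) * Real.pi) i * v' 0 i)
      - ((∑ i, x' 0 i * v 0 i) - ∑ i, x 0 i * v' 0 i)
      = W (2 * (k:ℝ) * Real.pi) - W 0 := by rw [hWk, hW0]
    _ ≥ (k:ℝ) * (|∫ t in (0:ℝ)..T, fP t| - M * ∫ t in (0:ℝ)..T, nv t) := by
        rw [mul_sub] at key ⊢; linarith
    _ = (k:ℝ) * (|∫ t in (0:ℝ)..T, fP t| - M * ∫ t in (0:ℝ)..T, nv t) := rfl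
end

section
/- Consider the cyclically coupled system x_j'' + n_j² x_j + h_j(x_{j+1}) = p_j(t), j = 1,…,d (indices mod d, so x_{d+1} = x₁), with n_j ∈ ℕ for every j. Fix an index j and set Δh_j = max{limsup_{s→+∞} h_j(s), limsup_{s→−∞} h_j(s)} − min{liminf_{s→+∞} h_j(s), liminf_{s→−∞} h_j(s)}. Then for every ε > 0 there exists A > 0 such that for every solution x of the system with x_{j+1}(0)² + x_{j+1}'(0)² ≥ A², and every φ ∈ [0,2π], one has ∫₀^{2π} h_j(x_{j+1}(t))·sin(n_j t + φ) dt ≤ 2Δh_j + ε; the constant A is independent of the values of the other components (x_i(0), x_i'(0)), i ≠ j+1. -/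
open Real Filter MeasureTheory intervalIntegral

lemma per_subst (f : ℝ → ℝ) (hf : Function.Periodic f (2*Real.pi))
    (hint : ∀ a b : ℝ, IntervalIntegrable f volume a b) (m : ℕ) (hm : 0 < m) (θ : ℝ) :
    ∫ t in (0:ℝ)..2*Real.pi, f ((m:ℝ)*t + θ) = ∫ u in (0:ℝ)..2*Real.pi, f u := by
  have hm' : (m:ℝ) ≠ 0 := by positivity
  rw [intervalIntegral.integral_comp_mul_add f hm' θ]
  have h1 : (m:ℝ) * (2*Real.pi) + θ = θ + (m:ℤ) • (2*Real.pi) := by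
    rw [zsmul_eq_mul]; push_cast; ring
  have h0 : (m:ℝ) * 0 + θ = θ := by ring
  rw [h0, h1, hf.intervalIntegral_add_zsmul_eq (m:ℤ) θ hint,
    hf.intervalIntegral_add_eq θ 0, zero_add]
  rw [zsmul_eq_mul, smul_eq_mul]
  push_cast
  field_simp

lemma abs_sin_per : Function.Periodic (fun u => |Real.sin u|) (2*Real.pi) := by
  intro x; simp [Real.sin_add_two_pi]

lemma integral_abs_sin : ∫ u in (0:ℝ)..2*Real.pi, |Real.sin u| = 4 := by
  have hsplit : ∫ u in (0:ℝ)..2*Real.pi, |Real.sin u| =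
      (∫ u in (0:ℝ)..Real.pi, |Real.sin u|) + ∫ u in Real.pi..2*Real.pi, |Real.sin u| := by
    rw [intervalIntegral.integral_add_adjacent_intervals] <;>
      exact (continuous_abs.comp Real.continuous_sin).intervalIntegrable _ _
  have h1 : ∫ u in (0:ℝ)..Real.pi, |Real.sin u| = 2 := by
    rw [intervalIntegral.integral_congr (g := Real.sin) ?_, integral_sin]
    · norm_num
    · intro x hx
      rw [Set.uIcc_of_le Real.pi_nonneg] at hx
      exact abs_of_nonneg (Real.sin_nonneg_of_nonneg_of_le_pi hx.1 hx.2)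
  have h2 : ∫ u in Real.pi..2*Real.pi, |Real.sin u| = 2 := by
    rw [intervalIntegral.integral_congr (g := fun x => -Real.sin x) ?_]
    · rw [intervalIntegral.integral_neg, integral_sin]
      simp [Real.cos_two_pi]; norm_num
    · intro x hx
      rw [Set.uIcc_of_le (by linarith [Real.pi_pos] : Real.pi ≤ 2*Real.pi)] at hx
      have : Real.sin x ≤ 0 := by
        have := Real.sin_nonneg_of_nonneg_of_le_pi (x := x - Real.pi)
          (by linarith [hx.1]) (by linarith [hx.2])
        rw [Real.sin_sub_pi] at this; linarith
      simp [abs_of_nonpos this]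
  rw [hsplit, h1, h2]; norm_num

lemma integral_sin_shift (m : ℕ) (hm : 0 < m) (φ : ℝ) :
    ∫ t in (0:ℝ)..2*Real.pi, Real.sin ((m:ℝ)*t + φ) = 0 := by
  rw [per_subst Real.sin Real.sin_periodic
    (fun a b => Real.continuous_sin.intervalIntegrable a b) m hm φ]
  rw [integral_sin]; simp

lemma integral_abs_sin_shift (m : ℕ) (hm : 0 < m) (φ : ℝ) :
    ∫ t in (0:ℝ)..2*Real.pi, |Real.sin ((m:ℝ)*t + φ)| = 4 := by
  rw [per_subst (fun u => |Real.sin u|) abs_sin_per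
    (fun a b => (continuous_abs.comp Real.continuous_sin).intervalIntegrable a b) m hm φ]
  exact integral_abs_sin

lemma integral_sin_pow_shift (m : ℕ) (hm : 0 < m) (θ : ℝ) (k : ℕ) :
    ∫ t in (0:ℝ)..2*Real.pi, (Real.sin ((m:ℝ)*t + θ))^k
      = ∫ u in (0:ℝ)..2*Real.pi, (Real.sin u)^k := by
  exact per_subst (fun u => (Real.sin u)^k) (fun x => by simp [Real.sin_add_two_pi])
    (fun a b => (Real.continuous_sin.pow k).intervalIntegrable a b) m hm θ

lemma sin_pow_tendsto_zero :
    Tendsto (fun k : ℕ => ∫ u in (0:ℝ)..2*Real.pi, (Real.sin u)^(2*k)) atTop (nhds 0) := by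
  have h2π : (0:ℝ) ≤ 2*Real.pi := by positivity
  have heq : ∀ k : ℕ, ∫ u in (0:ℝ)..2*Real.pi, (Real.sin u)^(2*k)
      = ∫ u in Set.Ioc (0:ℝ) (2*Real.pi), (Real.sin u)^(2*k) := fun k =>
    intervalIntegral.integral_of_le h2π
  simp only [heq]
  have key := MeasureTheory.tendsto_integral_of_dominated_convergence
    (μ := volume.restrict (Set.Ioc (0:ℝ) (2*Real.pi)))
    (F := fun (k:ℕ) u => (Real.sin u)^(2*k)) (f := fun _ => (0:ℝ)) (bound := fun _ => (1:ℝ))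
    ?_ ?_ ?_ ?_
  · simpa using key
  · exact fun k => ((Real.continuous_sin.pow (2*k)).aestronglyMeasurable)
  · exact MeasureTheory.integrable_const 1
  · intro k
    filter_upwards with u
    rw [Real.norm_eq_abs, abs_pow]
    exact pow_le_one₀ (abs_nonneg _) (Real.abs_sin_le_one _)
  · have hnull : volume ({u : ℝ | |Real.sin u| = 1}) = 0 := by
      have hsub : {u : ℝ | |Real.sin u| = 1} ⊆ ⋃ k : ℤ, {(2*(k:ℝ)+1)*(Real.pi/2)} := by
        intro u hu
        have hcos : Real.cos u = 0 := by
          have := Real.sin_sq_add_cos_sq u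
          have h1 : Real.sin u ^ 2 = 1 := by
            rw [← sq_abs, hu]; norm_num
          nlinarith [Real.sin_sq_add_cos_sq u]
        rw [Real.cos_eq_zero_iff] at hcos
        obtain ⟨k, hk⟩ := hcos
        exact Set.mem_iUnion.2 ⟨k, by simp [hk]; ring⟩
      exact measure_mono_null hsub (measure_iUnion_null fun k => measure_singleton _)
    rw [MeasureTheory.ae_restrict_iff' measurableSet_Ioc]
    refine MeasureTheory.ae_iff.2 (measure_mono_null ?_ hnull)
    intro u hu
    simp only [Set.mem_setOf_eq, Classical.not_imp] at hu
    by_contra habs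
    have hlt : |Real.sin u| < 1 := lt_of_le_of_ne (Real.abs_sin_le_one u) habs
    apply hu.2
    have ht : Tendsto (fun k : ℕ => (Real.sin u ^ 2)^k) atTop (nhds 0) :=
      tendsto_pow_atTop_nhds_zero_of_lt_one (sq_nonneg _)
        (by rw [← sq_abs]; nlinarith [abs_nonneg (Real.sin u)])
    simpa [pow_mul] using ht

lemma duhamel (m : ℝ) (y y' y'' : ℝ → ℝ) (g : ℝ → ℝ)
    (hy : ∀ t, HasDerivAt y (y' t) t) (hy' : ∀ t, HasDerivAt y' (y'' t) t)
    (hg : Continuous g)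
    (heq : ∀ t, y'' t = -m^2 * y t + g t) (t : ℝ) :
    m * y t = m * y 0 * Real.cos (m*t) + y' 0 * Real.sin (m*t)
      + ∫ s in (0:ℝ)..t, Real.sin (m*(t-s)) * g s := by
  set Φ : ℝ → ℝ := fun s => m * y s * Real.cos (m*(t-s)) + y' s * Real.sin (m*(t-s)) with hΦ
  have hycont : Continuous y := by
    have : Differentiable ℝ y := fun u => (hy u).differentiableAt
    exact this.continuous
  have hy'cont : Continuous y' := by
    have : Differentiable ℝ y' := fun u => (hy' u).differentiableAt
    exact this.continuous
  have hderiv : ∀ s, HasDerivAt Φ (Real.sin (m*(t-s)) * g s) s := by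
    intro s
    have hlin : HasDerivAt (fun s : ℝ => m*(t-s)) (-m) s := by
      simpa using ((hasDerivAt_id s).const_sub t).const_mul m
    have hcos : HasDerivAt (fun s : ℝ => Real.cos (m*(t-s))) (Real.sin (m*(t-s)) * m) s := by
      have := (Real.hasDerivAt_cos (m*(t-s))).comp s hlin
      simp only [neg_mul, mul_neg, neg_neg] at this
      exact this
    have hsin : HasDerivAt (fun s : ℝ => Real.sin (m*(t-s))) (-(Real.cos (m*(t-s)) * m)) s := by
      have := (Real.hasDerivAt_sin (m*(t-s))).comp s hlin
      simp only [neg_mul, mul_neg, neg_neg] at this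
      exact this
    have h1 : HasDerivAt (fun s => m * y s * Real.cos (m*(t-s)))
        (m * y' s * Real.cos (m*(t-s)) + m * y s * (Real.sin (m*(t-s)) * m)) s :=
      (((hy s).const_mul m).mul hcos)
    have h2 : HasDerivAt (fun s => y' s * Real.sin (m*(t-s)))
        (y'' s * Real.sin (m*(t-s)) + y' s * (-(Real.cos (m*(t-s)) * m))) s :=
      ((hy' s).mul hsin)
    have := h1.add h2
    have hval : m * y' s * Real.cos (m*(t-s)) + m * y s * (Real.sin (m*(t-s)) * m)
        + (y'' s * Real.sin (m*(t-s)) + y' s * (-(Real.cos (m*(t-s)) * m)))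
        = Real.sin (m*(t-s)) * g s := by
      rw [heq s]; ring
    rw [hval] at this
    exact this
  have hint : IntervalIntegrable (fun s => Real.sin (m*(t-s)) * g s) volume 0 t := by
    have hc : Continuous (fun s : ℝ => Real.sin (m*(t-s))) :=
      Real.continuous_sin.comp (continuous_const.mul (continuous_const.sub continuous_id))
    exact (hc.mul hg).intervalIntegrable _ _
  have hFTC := intervalIntegral.integral_eq_sub_of_hasDerivAt
    (fun s _ => hderiv s) hint
  rw [hFTC]
  simp only [hΦ]
  rw [sub_self, mul_zero, Real.cos_zero, Real.sin_zero]
  ring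

lemma polar_decomp (a b : ℝ) (hz : a^2 + b^2 ≠ 0) :
    ∃ θ : ℝ, ∀ X : ℝ,
      a * Real.cos X + b * Real.sin X = Real.sqrt (a^2+b^2) * Real.cos (X - θ) := by
  have hz' : (⟨a,b⟩ : ℂ) ≠ 0 := by
    intro hc
    rw [Complex.ext_iff] at hc
    simp at hc
    rw [hc.1, hc.2] at hz; norm_num at hz
  have habs : ‖(⟨a,b⟩ : ℂ)‖ = Real.sqrt (a^2+b^2) := by
    rw [Complex.norm_def, Complex.normSq_mk]; ring_nf
  have hr : (0:ℝ) < Real.sqrt (a^2+b^2) := by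
    rw [← habs]
    exact (norm_pos_iff.mpr hz')
  set r := Real.sqrt (a^2+b^2) with hrdef
  have ha : a = r * Real.cos (Complex.arg ⟨a,b⟩) := by
    rw [Complex.cos_arg hz', habs]
    field_simp
  have hb : b = r * Real.sin (Complex.arg ⟨a,b⟩) := by
    rw [Complex.sin_arg, habs]
    field_simp
  refine ⟨Complex.arg ⟨a,b⟩, fun X => ?_⟩
  rw [Real.cos_sub]
  linear_combination (Real.cos X) * ha + (Real.sin X) * hb

lemma exists_S (f : ℝ → ℝ) (M : ℝ) (hM : ∀ s, |f s| ≤ M) (ε₁ : ℝ) (hε₁ : 0 < ε₁) :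
    ∃ S : ℝ, 0 < S ∧ ∀ s : ℝ, S ≤ |s| →
      |f s - (max (Filter.limsup f Filter.atTop) (Filter.limsup f Filter.atBot)
            + min (Filter.liminf f Filter.atTop) (Filter.liminf f Filter.atBot))/2|
        ≤ (max (Filter.limsup f Filter.atTop) (Filter.limsup f Filter.atBot)
            - min (Filter.liminf f Filter.atTop) (Filter.liminf f Filter.atBot))/2 + ε₁ := by
  set L := max (Filter.limsup f Filter.atTop) (Filter.limsup f Filter.atBot) with hL
  set l := min (Filter.liminf f Filter.atTop) (Filter.liminf f Filter.atBot) with hl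
  have hbT : Filter.IsBoundedUnder (· ≤ ·) Filter.atTop f :=
    Filter.isBoundedUnder_of ⟨M, fun s => (abs_le.1 (hM s)).2⟩
  have hbT' : Filter.IsBoundedUnder (· ≥ ·) Filter.atTop f :=
    Filter.isBoundedUnder_of ⟨-M, fun s => (abs_le.1 (hM s)).1⟩
  have hbB : Filter.IsBoundedUnder (· ≤ ·) Filter.atBot f :=
    Filter.isBoundedUnder_of ⟨M, fun s => (abs_le.1 (hM s)).2⟩
  have hbB' : Filter.IsBoundedUnder (· ≥ ·) Filter.atBot f :=
    Filter.isBoundedUnder_of ⟨-M, fun s => (abs_le.1 (hM s)).1⟩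
  have h1 : ∀ᶠ s in Filter.atTop, f s < L + ε₁ :=
    Filter.eventually_lt_of_limsup_lt
      (lt_of_le_of_lt (le_max_left _ _) (lt_add_of_pos_right L hε₁)) hbT
  have h2 : ∀ᶠ s in Filter.atTop, l - ε₁ < f s :=
    Filter.eventually_lt_of_lt_liminf
      (lt_of_lt_of_le (sub_lt_self l hε₁) (min_le_left _ _)) hbT'
  have h3 : ∀ᶠ s in Filter.atBot, f s < L + ε₁ :=
    Filter.eventually_lt_of_limsup_lt
      (lt_of_le_of_lt (le_max_right _ _) (lt_add_of_pos_right L hε₁)) hbB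
  have h4 : ∀ᶠ s in Filter.atBot, l - ε₁ < f s :=
    Filter.eventually_lt_of_lt_liminf
      (lt_of_lt_of_le (sub_lt_self l hε₁) (min_le_right _ _)) hbB'
  obtain ⟨S₁, hS₁⟩ := Filter.eventually_atTop.1 (h1.and h2)
  obtain ⟨S₂, hS₂⟩ := Filter.eventually_atBot.1 (h3.and h4)
  refine ⟨max 1 (max S₁ (-S₂)), lt_of_lt_of_le one_pos (le_max_left _ _), fun s hs => ?_⟩
  have hkey : f s < L + ε₁ ∧ l - ε₁ < f s := by
    rcases le_or_gt 0 s with hsp | hsn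
    · have : S₁ ≤ s := by
        rw [abs_of_nonneg hsp] at hs
        calc S₁ ≤ max S₁ (-S₂) := le_max_left _ _
          _ ≤ max 1 (max S₁ (-S₂)) := le_max_right _ _
          _ ≤ s := hs
      exact hS₁ s this
    · have : s ≤ S₂ := by
        rw [abs_of_neg hsn] at hs
        have : -S₂ ≤ -s := le_trans (le_trans (le_max_right S₁ (-S₂))
          (le_max_right 1 _)) hs
        linarith
      exact hS₂ s this
  rw [abs_le]
  constructor <;> nlinarith [hkey.1, hkey.2]

lemma bern_half (k : ℕ) (x : ℝ) (h0 : 0 ≤ x) (h1 : (2*(k:ℝ)+1) * x ≤ 1) :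
    (1:ℝ)/2 ≤ (1-x)^k := by
  have hk : (0:ℝ) ≤ k := Nat.cast_nonneg k
  have hpos : (0:ℝ) < 2*(k:ℝ)+1 := by positivity
  have h1' : x ≤ 1/(2*(k:ℝ)+1) := by rw [le_div_iff₀ hpos]; linarith
  have hx1 : x ≤ 1 := h1'.trans (by rw [div_le_one hpos]; linarith)
  have hber := one_add_mul_le_pow (a := -x) (by linarith) k
  have h2 : (k:ℝ)*x ≤ k*(1/(2*(k:ℝ)+1)) := mul_le_mul_of_nonneg_left h1' hk
  have h3 : (k:ℝ)*(1/(2*(k:ℝ)+1)) ≤ 1/2 := by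
    rw [mul_one_div, div_le_div_iff₀ hpos two_pos]; linarith
  calc (1:ℝ)/2 ≤ 1 + k*(-x) := by nlinarith
    _ ≤ (1 + -x)^k := hber
    _ = (1-x)^k := by ring_nf


lemma aux_two_mul (F m0 s2 : ℝ) (h2 : F ≤ 2*m0) (h1 : 1 ≤ 2*s2) (hm : 0 ≤ m0) :
    F ≤ (4*m0)*s2 := by nlinarith

lemma aux_eps (I m0 e : ℝ) (hlt : I*(8*(m0+1)) < e) (hI : 0 ≤ I) (hm : 0 ≤ m0) :
    (4*m0)*I ≤ e/2 := by nlinarith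

lemma aux_div (m z C : ℝ) (hle : m * z ≤ C) (hz : 0 ≤ z) (hm : 1 ≤ m) : z ≤ C := by nlinarith

set_option maxHeartbeats 2000000 in
/-- For the cyclically coupled system `x_j'' + n_j² x_j + h_j(x_{j+1}) = p_j(t)` (indices
mod `d`), with `n_j ∈ ℕ` for every `j`, fix an index `j` and set
`Δh_j = max{limsup_{+∞} h_j, limsup_{-∞} h_j} - min{liminf_{+∞} h_j, liminf_{-∞} h_j}`.
Then for every `ε > 0` there is `A > 0`, independent of the other components of the initial
data, such that every solution with `x_{j+1}(0)² + x_{j+1}'(0)² ≥ A²` satisfies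
`∫₀^{2π} h_j(x_{j+1}(t)) sin(n_j t + φ) dt ≤ 2Δh_j + ε` for all `φ ∈ [0,2π]`. -/
theorem cyclic_asymptotic_integral_estimate
    (d : ℕ) [NeZero d] (n : Fin d → ℝ) (h : Fin d → ℝ → ℝ) (p : Fin d → ℝ → ℝ)
    (hn : ∀ j, 0 < n j)
    (hLip : ∀ j, LocallyLipschitz (h j))
    (hbd : ∀ j, ∃ M, ∀ s, |h j s| ≤ M)
    (hp : ∀ j, Continuous (p j))
    (hper : ∀ j, Function.Periodic (p j) (2 * Real.pi))
    (hnat : ∀ j, ∃ m : ℕ, 0 < m ∧ n j = (m : ℝ))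
    (j : Fin d) (Δ : ℝ)
    (hΔ : Δ = max (Filter.limsup (h j) Filter.atTop) (Filter.limsup (h j) Filter.atBot)
      - min (Filter.liminf (h j) Filter.atTop) (Filter.liminf (h j) Filter.atBot)) :
    ∀ ε > 0, ∃ A > 0, ∀ x x' x'' : Fin d → ℝ → ℝ,
      (∀ i t, HasDerivAt (x i) (x' i t) t) →
      (∀ i t, HasDerivAt (x' i) (x'' i t) t) →
      (∀ i t, x'' i t + (n i) ^ 2 * x i t + h i (x (i + 1) t) = p i t) →
      (x (j + 1) 0) ^ 2 + (x' (j + 1) 0) ^ 2 ≥ A ^ 2 →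
      ∀ φ ∈ Set.Icc (0 : ℝ) (2 * Real.pi),
        (∫ t in (0 : ℝ)..(2 * Real.pi), h j (x (j + 1) t) * Real.sin (n j * t + φ))
          ≤ 2 * Δ + ε := by
  intro ε hε
  obtain ⟨mj, hmjpos, hnj⟩ := hnat j
  obtain ⟨mi, hmipos, hni⟩ := hnat (j+1)
  have hmj1 : (1:ℝ) ≤ (mj:ℝ) := by exact_mod_cast hmjpos
  have hmi1 : (1:ℝ) ≤ (mi:ℝ) := by exact_mod_cast hmipos
  have hπ : (0:ℝ) < Real.pi := Real.pi_pos
  obtain ⟨M0, hM0⟩ := hbd j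
  have hM0nn : 0 ≤ M0 := le_trans (abs_nonneg _) (hM0 0)
  obtain ⟨M', hM'⟩ := hbd (j+1)
  have hM'nn : 0 ≤ M' := le_trans (abs_nonneg _) (hM' 0)
  obtain ⟨P, hP⟩ : ∃ P, ∀ s ∈ Set.Icc (0:ℝ) (2*Real.pi), ‖p (j+1) s‖ ≤ P :=
    isCompact_Icc.exists_bound_of_continuousOn (hp (j+1)).continuousOn
  have hPnn : 0 ≤ P := le_trans (norm_nonneg _) (hP 0 ⟨le_refl 0, by positivity⟩)
  set C : ℝ := (P + M') * (2*Real.pi) with hCdef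
  have hCnn : 0 ≤ C := by positivity
  -- the threshold S (before folding L, l so that `set` rewrites hS)
  obtain ⟨S, hSpos, hS⟩ := exists_S (h j) M0 hM0 (ε/8) (by linarith)
  -- limsup/liminf constants
  set L := max (Filter.limsup (h j) Filter.atTop) (Filter.limsup (h j) Filter.atBot) with hLdef
  set l := min (Filter.liminf (h j) Filter.atTop) (Filter.liminf (h j) Filter.atBot) with hldef
  have hbT : Filter.IsBoundedUnder (· ≤ ·) Filter.atTop (h j) :=
    Filter.isBoundedUnder_of ⟨M0, fun s => (abs_le.1 (hM0 s)).2⟩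
  have hbT' : Filter.IsBoundedUnder (· ≥ ·) Filter.atTop (h j) :=
    Filter.isBoundedUnder_of ⟨-M0, fun s => (abs_le.1 (hM0 s)).1⟩
  have hbB : Filter.IsBoundedUnder (· ≤ ·) Filter.atBot (h j) :=
    Filter.isBoundedUnder_of ⟨M0, fun s => (abs_le.1 (hM0 s)).2⟩
  have hbB' : Filter.IsBoundedUnder (· ≥ ·) Filter.atBot (h j) :=
    Filter.isBoundedUnder_of ⟨-M0, fun s => (abs_le.1 (hM0 s)).1⟩
  have hLM : L ≤ M0 := by
    apply max_le
    · exact Filter.limsup_le_of_le hbT'.isCoboundedUnder_flip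
        (Filter.Eventually.of_forall fun s => (abs_le.1 (hM0 s)).2)
    · exact Filter.limsup_le_of_le hbB'.isCoboundedUnder_flip
        (Filter.Eventually.of_forall fun s => (abs_le.1 (hM0 s)).2)
  have hlM : -M0 ≤ l := by
    apply le_min
    · exact Filter.le_liminf_of_le hbT.isCoboundedUnder_flip
        (Filter.Eventually.of_forall fun s => (abs_le.1 (hM0 s)).1)
    · exact Filter.le_liminf_of_le hbB.isCoboundedUnder_flip
        (Filter.Eventually.of_forall fun s => (abs_le.1 (hM0 s)).1)
  have hlL : l ≤ L := by
    have h1 : Filter.liminf (h j) Filter.atTop ≤ Filter.limsup (h j) Filter.atTop :=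
      Filter.liminf_le_limsup hbT hbT'
    exact le_trans (min_le_left _ _) (le_trans h1 (le_max_left _ _))
  have hΔ' : Δ = L - l := hΔ
  have hΔnn : 0 ≤ Δ := by rw [hΔ']; linarith
  set c := (L + l)/2 with hcdef
  have hcabs : |c| ≤ M0 := by
    rw [abs_le]
    constructor
    · simp only [hcdef]; linarith
    · simp only [hcdef]; linarith
  have hS' : ∀ s : ℝ, S ≤ |s| → |h j s - c| ≤ Δ/2 + ε/8 := by
    intro s hs
    have := hS s hs
    rw [hcdef, hΔ']
    convert this using 2 <;> ring
  -- choose k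
  have hεk : (0:ℝ) < ε/(8*(M0+1)) := by positivity
  obtain ⟨k, hk⟩ := (sin_pow_tendsto_zero.eventually_lt_const hεk).exists
  set Ik := ∫ u in (0:ℝ)..2*Real.pi, (Real.sin u)^(2*k) with hIkdef
  -- choose A
  set Kmax := max 1 ((mi:ℝ)^2) with hKdef
  have hK1 : (1:ℝ) ≤ Kmax := le_max_left _ _
  have hKmi : (mi:ℝ)^2 ≤ Kmax := le_max_right _ _
  set A := Real.sqrt (Kmax * ((2*k+1) * (S + C + 1)^2)) with hAdef
  have hA2 : A^2 = Kmax * ((2*k+1) * (S + C + 1)^2) := Real.sq_sqrt (by positivity)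
  have hApos : 0 < A := Real.sqrt_pos.2 (by positivity)
  refine ⟨A, hApos, ?_⟩

  intro x x' x'' hx hx' heqn hinit φ hφ
  have hxcont : ∀ i, Continuous (x i) := fun i => by
    have hdx : Differentiable ℝ (x i) := fun t => (hx i t).differentiableAt
    exact hdx.continuous
  set y : ℝ → ℝ := x (j+1) with hydef
  have hycont : Continuous y := hxcont (j+1)
  -- forcing term
  set g : ℝ → ℝ := fun s => p (j+1) s - h (j+1) (x (j+1+1) s) with hgdef
  have hgcont : Continuous g :=
    (hp (j+1)).sub ((hLip (j+1)).continuous.comp (hxcont (j+1+1)))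
  have hyeq : ∀ s, x'' (j+1) s = -((mi:ℝ))^2 * x (j+1) s + g s := by
    intro s
    have hq := heqn (j+1) s
    rw [hni] at hq
    simp only [hgdef]
    linarith
  have hdu := duhamel (mi:ℝ) (x (j+1)) (x' (j+1)) (x'' (j+1)) g
    (hx (j+1)) (hx' (j+1)) hgcont hyeq
  -- amplitude and phase
  set a := x (j+1) 0 with hadef
  set b := x' (j+1) 0 / (mi:ℝ) with hbdef
  have hmipos' : (0:ℝ) < (mi:ℝ) := by linarith
  have hb2 : x' (j+1) 0 = (mi:ℝ) * b := by
    simp only [hbdef]; field_simp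
  have hab : (2*(k:ℝ)+1) * (S + C + 1)^2 ≤ a^2 + b^2 := by
    have h1 : A^2 ≤ Kmax * (a^2 + b^2) := by
      calc A^2 ≤ a^2 + (x' (j+1) 0)^2 := hinit
        _ = a^2 + (mi:ℝ)^2 * b^2 := by rw [hb2]; ring
        _ ≤ Kmax * a^2 + Kmax * b^2 :=
            add_le_add (le_mul_of_one_le_left (sq_nonneg a) hK1)
              (mul_le_mul_of_nonneg_right hKmi (sq_nonneg b))
        _ = Kmax * (a^2+b^2) := by ring
    rw [hA2] at h1
    have hKpos : (0:ℝ) < Kmax := by linarith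
    have := le_of_mul_le_mul_left h1 hKpos
    calc (2*(k:ℝ)+1) * (S + C + 1)^2 = (2*↑k+1) * (S + C + 1)^2 := by norm_num
      _ ≤ a^2+b^2 := by exact_mod_cast this
  have habpos : (0:ℝ) < a^2 + b^2 := by
    have hpos0 : (0:ℝ) < (2*(k:ℝ)+1) * (S + C + 1)^2 := by positivity
    exact lt_of_lt_of_le hpos0 hab
  obtain ⟨θ, hθ⟩ := polar_decomp a b (ne_of_gt habpos)
  set r := Real.sqrt (a^2+b^2) with hrdef
  have hr2 : r^2 = a^2+b^2 := Real.sq_sqrt (by positivity)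
  have hrpos : 0 < r := Real.sqrt_pos.2 habpos
  -- representation with error bound
  have hrep : ∀ t ∈ Set.Icc (0:ℝ) (2*Real.pi), |y t - r * Real.cos ((mi:ℝ)*t - θ)| ≤ C := by
    intro t ht
    have hdut := hdu t
    have hE : |∫ s in (0:ℝ)..t, Real.sin ((mi:ℝ)*(t-s)) * g s| ≤ C := by
      have hb1 : ∀ s ∈ Set.uIoc (0:ℝ) t, ‖Real.sin ((mi:ℝ)*(t-s)) * g s‖ ≤ P + M' := by
        intro s hs
        have hsmem : s ∈ Set.Icc (0:ℝ) (2*Real.pi) := by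
          rw [Set.uIoc_of_le ht.1] at hs
          exact ⟨le_of_lt hs.1, le_trans hs.2 ht.2⟩
        have hg1 : |g s| ≤ P + M' := by
          simp only [hgdef]
          calc |p (j+1) s - h (j+1) (x (j+1+1) s)|
              ≤ |p (j+1) s| + |h (j+1) (x (j+1+1) s)| := abs_sub _ _
            _ ≤ P + M' := add_le_add (hP s hsmem) (hM' _)
        rw [Real.norm_eq_abs, abs_mul]
        calc |Real.sin ((mi:ℝ)*(t-s))| * |g s| ≤ 1 * (P+M') :=
              mul_le_mul (Real.abs_sin_le_one _) hg1 (abs_nonneg _) one_pos.le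
          _ = P + M' := one_mul _
      have hnorm := intervalIntegral.norm_integral_le_of_norm_le_const hb1
      rw [Real.norm_eq_abs] at hnorm
      calc |∫ s in (0:ℝ)..t, Real.sin ((mi:ℝ)*(t-s)) * g s| ≤ (P+M') * |t - 0| := hnorm
        _ ≤ (P+M') * (2*Real.pi) := by
            rw [sub_zero, abs_of_nonneg ht.1]
            exact mul_le_mul_of_nonneg_left ht.2 (by positivity)
        _ = C := hCdef.symm
    have hX := hθ ((mi:ℝ)*t)
    have hkey : (mi:ℝ) * (y t - r * Real.cos ((mi:ℝ)*t - θ))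
        = ∫ s in (0:ℝ)..t, Real.sin ((mi:ℝ)*(t-s)) * g s := by
      simp only [hydef]
      linear_combination hdut + (mi:ℝ) * hX + Real.sin ((mi:ℝ)*t) * hb2
    have habs : (mi:ℝ) * |y t - r * Real.cos ((mi:ℝ)*t - θ)| ≤ C := by
      have habs' : |(mi:ℝ) * (y t - r * Real.cos ((mi:ℝ)*t - θ))|
          = (mi:ℝ) * |y t - r * Real.cos ((mi:ℝ)*t - θ)| := by
        rw [abs_mul, abs_of_pos hmipos']
      rw [← habs', hkey]
      exact hE
    exact aux_div _ _ _ habs (abs_nonneg _) hmi1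
  -- the bad set
  set B := {t : ℝ | |y t| ≤ S} ∩ Set.Ioc 0 (2*Real.pi) with hBdef
  have hBsub : B ⊆ Set.Ioc 0 (2*Real.pi) := Set.inter_subset_right
  have hBmeas : MeasurableSet B :=
    ((isClosed_le (continuous_abs.comp hycont) continuous_const).measurableSet).inter
      measurableSet_Ioc
  have hBkey : ∀ t ∈ B, 1 ≤ 2 * (Real.sin ((mi:ℝ)*t - θ))^(2*k) := by
    intro t ht
    have htI : t ∈ Set.Icc (0:ℝ) (2*Real.pi) := ⟨le_of_lt ht.2.1, ht.2.2⟩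
    have h1 : |r * Real.cos ((mi:ℝ)*t - θ)| ≤ S + C := by
      have h2 := hrep t htI
      have h3 : |y t| ≤ S := ht.1
      calc |r * Real.cos ((mi:ℝ)*t - θ)|
          = |y t - (y t - r * Real.cos ((mi:ℝ)*t - θ))| := by congr 1; ring
        _ ≤ |y t| + |y t - r * Real.cos ((mi:ℝ)*t - θ)| := abs_sub _ _
        _ ≤ S + C := add_le_add h3 h2
    set u := (Real.cos ((mi:ℝ)*t - θ))^2 with hudef
    have hunn : 0 ≤ u := sq_nonneg _
    have hsq : r^2 * u ≤ (S+C)^2 := by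
      have h1' : (r * Real.cos ((mi:ℝ)*t - θ))^2 ≤ (S+C)^2 := by
        rw [← sq_abs]
        exact pow_le_pow_left₀ (abs_nonneg _) h1 2
      calc r^2 * u = (r * Real.cos ((mi:ℝ)*t - θ))^2 := by rw [hudef]; ring
        _ ≤ (S+C)^2 := h1'
    have h4 : (2*(k:ℝ)+1) * (S+C)^2 ≤ r^2 := by
      rw [hr2]
      calc (2*(k:ℝ)+1) * (S+C)^2 ≤ (2*(k:ℝ)+1) * (S+C+1)^2 := by
            apply mul_le_mul_of_nonneg_left _ (by positivity)
            exact pow_le_pow_left₀ (by positivity) (by linarith) 2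
        _ ≤ a^2+b^2 := hab
    have hcos2 : (2*(k:ℝ)+1) * u ≤ 1 := by
      have h5 : ((2*(k:ℝ)+1) * u) * r^2 ≤ 1 * r^2 := by
        calc ((2*(k:ℝ)+1) * u) * r^2 = (2*(k:ℝ)+1) * (r^2 * u) := by ring
          _ ≤ (2*(k:ℝ)+1) * (S+C)^2 := mul_le_mul_of_nonneg_left hsq (by positivity)
          _ ≤ r^2 := h4
          _ = 1 * r^2 := (one_mul _).symm
      exact le_of_mul_le_mul_right h5 (by positivity)
    have hbern := bern_half k u hunn hcos2
    have hsin : (Real.sin ((mi:ℝ)*t-θ))^(2*k) = (1 - u)^k := by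
      rw [pow_mul, Real.sin_sq]
    rw [hsin]
    linarith
  -- the integrand
  set fb : ℝ → ℝ := fun t => (h j (y t) - c) * Real.sin ((mj:ℝ)*t + φ) with hfbdef
  have hfbcont : Continuous fb := by
    apply Continuous.mul
    · exact ((hLip j).continuous.comp hycont).sub continuous_const
    · exact Real.continuous_sin.comp ((continuous_const.mul continuous_id).add continuous_const)
  have h2πnn : (0:ℝ) ≤ 2*Real.pi := by positivity
  have hsplit0 : (∫ t in (0:ℝ)..2*Real.pi, h j (y t) * Real.sin ((n j)*t + φ))
      = ∫ t in (0:ℝ)..2*Real.pi, fb t := by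
    rw [hnj]
    have hint1 : IntervalIntegrable fb volume 0 (2*Real.pi) := hfbcont.intervalIntegrable _ _
    have hint2 : IntervalIntegrable (fun t => c * Real.sin ((mj:ℝ)*t + φ)) volume 0 (2*Real.pi) :=
      (continuous_const.mul (Real.continuous_sin.comp
        ((continuous_const.mul continuous_id).add continuous_const))).intervalIntegrable _ _
    have heqpt : ∀ t, h j (y t) * Real.sin ((mj:ℝ)*t+φ)
        = fb t + c * Real.sin ((mj:ℝ)*t+φ) := fun t => by simp only [hfbdef]; ring
    rw [intervalIntegral.integral_congr (g := fun t => fb t + c * Real.sin ((mj:ℝ)*t+φ))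
      (fun t _ => heqpt t)]
    rw [intervalIntegral.integral_add hint1 hint2, intervalIntegral.integral_const_mul,
      integral_sin_shift mj hmjpos φ]
    ring
  rw [hsplit0, intervalIntegral.integral_of_le h2πnn]
  have hIoc : Set.Ioc (0:ℝ) (2*Real.pi) = B ∪ (Set.Ioc (0:ℝ) (2*Real.pi) \ B) :=
    (Set.union_diff_cancel hBsub).symm
  rw [hIoc, MeasureTheory.setIntegral_union Set.disjoint_sdiff_right
    (measurableSet_Ioc.diff hBmeas) (hfbcont.integrableOn_Ioc.mono_set hBsub)
    (hfbcont.integrableOn_Ioc.mono_set Set.diff_subset)]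
  -- bad part
  have hbad : ∫ t in B, fb t ≤ ε/2 := by
    have hcont2 : Continuous (fun t => (4*M0) * (Real.sin ((mi:ℝ)*t - θ))^(2*k)) := by
      apply continuous_const.mul
      exact (Real.continuous_sin.comp ((continuous_const.mul continuous_id).sub
        continuous_const)).pow _
    have hpt : ∀ t ∈ B, fb t ≤ (4*M0) * (Real.sin ((mi:ℝ)*t - θ))^(2*k) := by
      intro t ht
      have h1 := hBkey t ht
      have h2 : fb t ≤ 2*M0 := by
        calc fb t ≤ |fb t| := le_abs_self _
          _ = |h j (y t) - c| * |Real.sin ((mj:ℝ)*t+φ)| := abs_mul _ _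
          _ ≤ (M0 + M0) * 1 := by
              apply mul_le_mul _ (Real.abs_sin_le_one _) (abs_nonneg _) (by linarith)
              calc |h j (y t) - c| ≤ |h j (y t)| + |c| := abs_sub _ _
                _ ≤ M0 + M0 := add_le_add (hM0 _) hcabs
          _ = 2*M0 := by ring
      exact aux_two_mul _ _ _ h2 h1 hM0nn
    have hint1 : IntegrableOn fb B volume := hfbcont.integrableOn_Ioc.mono_set hBsub
    have hint2 : IntegrableOn (fun t => (4*M0) * (Real.sin ((mi:ℝ)*t - θ))^(2*k)) B volume :=
      hcont2.integrableOn_Ioc.mono_set hBsub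
    have hIknn : 0 ≤ Ik := by
      rw [hIkdef]
      apply intervalIntegral.integral_nonneg h2πnn
      intro u _
      rw [pow_mul]; positivity
    have hk2 : Ik * (8*(M0+1)) < ε := by
      rw [lt_div_iff₀ (by positivity)] at hk
      exact hk
    calc ∫ t in B, fb t ≤ ∫ t in B, (4*M0) * (Real.sin ((mi:ℝ)*t - θ))^(2*k) :=
          MeasureTheory.setIntegral_mono_on hint1 hint2 hBmeas hpt
      _ ≤ ∫ t in Set.Ioc (0:ℝ) (2*Real.pi), (4*M0) * (Real.sin ((mi:ℝ)*t - θ))^(2*k) := by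
          apply MeasureTheory.setIntegral_mono_set hcont2.integrableOn_Ioc
          · apply Filter.Eventually.of_forall
            intro u
            have : 0 ≤ (Real.sin ((mi:ℝ)*u - θ))^(2*k) := by rw [pow_mul]; positivity
            positivity
          · exact HasSubset.Subset.eventuallyLE hBsub
      _ = (4*M0) * Ik := by
          rw [← intervalIntegral.integral_of_le h2πnn, intervalIntegral.integral_const_mul]
          simp only [sub_eq_add_neg]
          rw [hIkdef, ← integral_sin_pow_shift mi hmipos (-θ) (2*k)]
      _ ≤ ε/2 := aux_eps _ _ _ hk2 hIknn hM0nn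
  -- good part
  have hgood : ∫ t in (Set.Ioc (0:ℝ) (2*Real.pi)) \ B, fb t ≤ 2*Δ + ε/2 := by
    have hGcont : Continuous (fun t => (Δ/2 + ε/8) * |Real.sin ((mj:ℝ)*t + φ)|) :=
      continuous_const.mul (continuous_abs.comp (Real.continuous_sin.comp
        ((continuous_const.mul continuous_id).add continuous_const)))
    have hpt : ∀ t ∈ (Set.Ioc (0:ℝ) (2*Real.pi)) \ B,
        fb t ≤ (Δ/2 + ε/8) * |Real.sin ((mj:ℝ)*t + φ)| := by
      intro t ht
      have htS : S ≤ |y t| := by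
        by_contra hcon
        push_neg at hcon
        exact ht.2 ⟨le_of_lt hcon, ht.1⟩
      have hhc := hS' (y t) htS
      calc fb t ≤ |fb t| := le_abs_self _
        _ = |h j (y t) - c| * |Real.sin ((mj:ℝ)*t+φ)| := abs_mul _ _
        _ ≤ (Δ/2 + ε/8) * |Real.sin ((mj:ℝ)*t + φ)| :=
            mul_le_mul_of_nonneg_right hhc (abs_nonneg _)
    calc ∫ t in (Set.Ioc (0:ℝ) (2*Real.pi)) \ B, fb t
        ≤ ∫ t in (Set.Ioc (0:ℝ) (2*Real.pi)) \ B, (Δ/2 + ε/8) * |Real.sin ((mj:ℝ)*t + φ)| :=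
          MeasureTheory.setIntegral_mono_on
            (hfbcont.integrableOn_Ioc.mono_set Set.diff_subset)
            (hGcont.integrableOn_Ioc.mono_set Set.diff_subset)
            (measurableSet_Ioc.diff hBmeas) hpt
      _ ≤ ∫ t in Set.Ioc (0:ℝ) (2*Real.pi), (Δ/2 + ε/8) * |Real.sin ((mj:ℝ)*t + φ)| := by
          apply MeasureTheory.setIntegral_mono_set hGcont.integrableOn_Ioc
          · apply Filter.Eventually.of_forall
            intro u
            have h8 : (0:ℝ) < ε/8 := by linarith
            positivity
          · exact HasSubset.Subset.eventuallyLE Set.diff_subset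
      _ = (Δ/2 + ε/8) * 4 := by
          rw [← intervalIntegral.integral_of_le h2πnn, intervalIntegral.integral_const_mul,
            integral_abs_sin_shift mj hmjpos φ]
      _ = 2*Δ + ε/2 := by ring
  linarith
end
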